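/- arXiv:2412.03397 — 10 statements merged into one kernel-verified Lean document; each statement's English description precedes it below -/
import Mathlib

section
/- Let C be an n×m ordinal matrix (every row has distinct entries, and for all distinct i,j ∈ [n] and k ∈ [m]\[n], c_{i,i} < c_{i,k} < c_{i,j}), and let O be an ordinal basis of C (|O| = n and for every column j ∈ [m] there is a row i with min_{l∈O} c_{i,l} ≥ c_{i,j}). Then for every column j ∈ O there is a unique row i ∈ [n] with min_{l∈O} c_{i,l} = c_{i,j}, and distinct columns of O are 'disliked' by distinct rows; i.e., the disliked relation is a bijection between [n] and O. -/
/-- `C` is an ordinal matrix: every row has pairwise distinct entries and for all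
distinct rows `i, j` and every column `k` with index at least `n`,
`c_{i,i} < c_{i,k} < c_{i,j}`. -/
def IsOrdinalMatrix {n m : ℕ} (hnm : n ≤ m) (C : Matrix (Fin n) (Fin m) ℝ) : Prop :=
  (∀ i : Fin n, ∀ j k : Fin m, j ≠ k → C i j ≠ C i k) ∧
  (∀ i j : Fin n, i ≠ j → ∀ k : Fin m, n ≤ (k : ℕ) →
    C i (Fin.castLE hnm i) < C i k ∧ C i k < C i (Fin.castLE hnm j))

/-! Since each row has distinct entries, row `i` dislikes exactly one column of `O`, its argmin
on `O`. Applying the basis condition to a column `j ∈ O` yields a row `i` with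
`c_{i,j} ≤ u_i^O ≤ c_{i,j}`, so every column of `O` is disliked. The map sending a row to its
disliked column is thus a surjection `[n] → O` between sets of size `n`, hence a bijection. -/

theorem Finset.existsUnique_of_functional_of_card_eq {ι α : Type*} [Fintype ι] {s : Finset α}
    {R : ι → α → Prop} (hcard : Fintype.card ι = s.card)
    (hex : ∀ i, ∃ j ∈ s, R i j) (huniq : ∀ i, ∀ j ∈ s, ∀ j' ∈ s, R i j → R i j' → j = j')
    (hcover : ∀ j ∈ s, ∃ i, R i j) :
    ∀ j ∈ s, ∃! i, R i j := by
  choose d hds hdR using hex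
  let d' : ι → s := fun i => ⟨d i, hds i⟩
  have hsurj : Function.Surjective d' := by
    rintro ⟨j, hj⟩
    obtain ⟨i, hi⟩ := hcover j hj
    exact ⟨i, Subtype.ext (huniq i _ (hds i) j hj (hdR i) hi)⟩
  have hinj : Function.Injective d' :=
    ((Fintype.bijective_iff_surjective_and_card d').mpr ⟨hsurj, by simp [hcard]⟩).1
  intro j hj
  obtain ⟨i, hi⟩ := hcover j hj
  refine ⟨i, hi, fun i' hi' => hinj (Subtype.ext ?_)⟩
  exact (huniq i' _ (hds i') j hj (hdR i') hi').trans (huniq i _ (hds i) j hj (hdR i) hi).symm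

/-- For an ordinal matrix `C` and an ordinal basis `O` (|O| = n and every column is
not strictly dominated, i.e. for each column `j` some row `i` has
`min_{l ∈ O} c_{i,l} ≥ c_{i,j}`), every column `j ∈ O` is disliked by a unique row
(`min_{l∈O} c_{i,l} = c_{i,j}`), and distinct columns of `O` are disliked by distinct
rows: the disliked relation is a bijection between rows and `O`. -/
theorem disliked_relation_bijection {n m : ℕ} (hnm : n ≤ m)
    (C : Matrix (Fin n) (Fin m) ℝ) (hC : IsOrdinalMatrix hnm C)
    (O : Finset (Fin m)) (hOne : O.Nonempty) (hOcard : O.card = n)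
    (hOdom : ∀ j : Fin m, ∃ i : Fin n, C i j ≤ O.inf' hOne (fun l => C i l)) :
    (∀ j ∈ O, ∃! i : Fin n, O.inf' hOne (fun l => C i l) = C i j) ∧
    (∀ j ∈ O, ∀ j' ∈ O, ∀ i : Fin n,
      O.inf' hOne (fun l => C i l) = C i j →
      O.inf' hOne (fun l => C i l) = C i j' → j = j') := by
  have hrow_inj : ∀ i, Function.Injective (C i) := fun i j k h =>
    by_contra fun hne => hC.1 i j k hne h
  have hdisliked_uniq : ∀ i, ∀ j ∈ O, ∀ j' ∈ O, O.inf' hOne (fun l => C i l) = C i j →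
      O.inf' hOne (fun l => C i l) = C i j' → j = j' := fun i _ _ _ _ hj hj' =>
    hrow_inj i (hj.symm.trans hj')
  have hdisliked_cover : ∀ j ∈ O, ∃ i, O.inf' hOne (fun l => C i l) = C i j := fun j hj =>
    (hOdom j).imp fun _ hi => le_antisymm (O.inf'_le _ hj) hi
  refine ⟨O.existsUnique_of_functional_of_card_eq (by simp [hOcard])
    (fun i => O.exists_mem_eq_inf' hOne _) hdisliked_uniq hdisliked_cover, ?_⟩
  exact fun j hj j' hj' i => hdisliked_uniq i j hj j' hj'
end

section
/- Let T₁ = (U, A₁) and T₂ = (U, A₂) be two directed trees on the same vertex set U with |U| = n+1. Let M₁ be the A₁×A₂ network matrix of the pair (D₁ = (U,A₂), T₁) and M₂ be the A₂×A₁ network matrix of the pair (D₂ = (U,A₁), T₂). Then M₁ · M₂ equals the n×n identity matrix. -/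
/-!
For a tree arc `f = (u, v)` of `T₁`, let `side_f` be the indicator of the component of `v` in
`T₁ - f`. The signed arc indicators along a path of `T₁` telescope against `side_f`, so
`M₁ f a = side_f a.2 - side_f a.1`. Entry `(f, g)` of `M₁ M₂` is therefore
`∑ a ∈ A₂, (side_f a.2 - side_f a.1) * M₂ a g`, the same telescoping sum taken along the
`T₂`-path from `g.1` to `g.2`; it equals `side_f g.2 - side_f g.1`, which is `1` if `g = f`
and `0` for every other arc `g` of `T₁`.
-/

open SimpleGraph

variable {U : Type*}

/-- The underlying simple graph of a set of arcs. -/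
def arcGraph [DecidableEq U] (A : Finset (U × U)) : SimpleGraph U where
  Adj u v := u ≠ v ∧ ((u, v) ∈ A ∨ (v, u) ∈ A)
  symm := ⟨fun _ _ h => ⟨h.1.symm, h.2.symm⟩⟩
  loopless := ⟨fun _ h => h.1 rfl⟩

/-- `A` is a directed tree on `U`: its underlying undirected graph is a (spanning) tree,
and arcs are loopless and not doubled. -/
def IsDirTree [DecidableEq U] (A : Finset (U × U)) : Prop :=
  (arcGraph A).IsTree ∧ ∀ p ∈ A, p.1 ≠ p.2 ∧ Prod.swap p ∉ A

/-- The list of (oriented) arcs traversed by a walk. -/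
def dartProds [DecidableEq U] {A : Finset (U × U)} {u v : U}
    (p : (arcGraph A).Walk u v) : List (U × U) :=
  p.darts.map SimpleGraph.Dart.toProd

/-- `M` is the network matrix of the digraph with arc set `Arcs` w.r.t. the directed
tree with arc set `A₀`: the entry `(f, a)` is `1`/`-1`/`0` according as the tree arc `f`
is forward/backward/absent on the unique tree path between the endpoints of `a`. -/
def IsNetworkMatrix [DecidableEq U] (A₀ Arcs : Finset (U × U))
    (M : (U × U) → (U × U) → ℝ) : Prop :=
  ∀ f ∈ A₀, ∀ a ∈ Arcs, ∀ p : (arcGraph A₀).Walk a.1 a.2, p.IsPath →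
    M f a = if f ∈ dartProds p then 1 else if Prod.swap f ∈ dartProds p then -1 else 0

open Finset

section

variable [DecidableEq U]

def signedIncidence (L : List (U × U)) (a : U × U) : ℝ :=
  if a ∈ L then 1 else if a.swap ∈ L then -1 else 0

theorem signedIncidence_eq_sub {L : List (U × U)} {a : U × U} (h : a ∈ L → a.swap ∉ L) :
    signedIncidence L a = (if a ∈ L then 1 else 0) - (if a.swap ∈ L then 1 else 0) := by
  unfold signedIncidence
  split_ifs <;> simp_all

section dartProds

variable {A : Finset (U × U)} {x y : U} {p : (arcGraph A).Walk x y}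

theorem mem_or_swap_mem_of_mem_dartProds {d : U × U} (hd : d ∈ dartProds p) :
    d ∈ A ∨ d.swap ∈ A := by
  obtain ⟨d, -, rfl⟩ := List.mem_map.1 hd
  exact d.adj.2

theorem SimpleGraph.Walk.IsPath.dartProds_nodup (hp : p.IsPath) : (dartProds p).Nodup :=
  (hp.isTrail.edges_nodup.of_map _).map Dart.toProd_injective

theorem SimpleGraph.Walk.IsPath.swap_notMem_dartProds (hp : p.IsPath) {a : U × U}
    (h : a ∈ dartProds p) : a.swap ∉ dartProds p := by
  intro hswap
  obtain ⟨d, hd, rfl⟩ := List.mem_map.1 h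
  obtain ⟨d', hd', hd'_eq⟩ := List.mem_map.1 hswap
  have : d' = d := List.inj_on_of_nodup_map hp.isTrail.edges_nodup hd' hd
    ((dart_edge_eq_iff d' d).2 (Or.inr (Dart.ext _ _ hd'_eq)))
  subst this
  exact d'.adj.ne (congrArg Prod.fst hd'_eq)

end dartProds

theorem SimpleGraph.Walk.sum_darts_sub {V : Type*} {G : SimpleGraph V} (ψ : V → ℝ) {x y : V}
    (p : G.Walk x y) : (p.darts.map fun d => ψ d.snd - ψ d.fst).sum = ψ y - ψ x := by
  induction p with
  | nil => simp
  | cons h p ih =>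
    rw [Walk.darts_cons, List.map_cons, List.sum_cons, ih]
    ring

theorem Finset.sum_filter_mem_sub_sum_filter_swap_mem {M : Type*} [AddCommGroup M]
    {A D : Finset (U × U)} (hA : ∀ a ∈ A, a.swap ∉ A) (hD : ∀ d ∈ D, d ∈ A ∨ d.swap ∈ A)
    (w : U × U → M) (hw : ∀ d, w d.swap = -w d) :
    ∑ a ∈ A with a ∈ D, w a - ∑ a ∈ A with a.swap ∈ D, w a = ∑ d ∈ D, w d := by
  have h_fwd : A.filter (· ∈ D) = D.filter (· ∈ A) := by ext; simp [and_comm]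
  have h_bwd : ∑ a ∈ A with a.swap ∈ D, w a = -∑ d ∈ D with d ∉ A, w d := by
    rw [← sum_neg_distrib]
    refine sum_nbij' Prod.swap Prod.swap ?_ ?_ (fun _ _ => Prod.swap_swap _)
      (fun _ _ => Prod.swap_swap _) (fun a _ => by rw [hw, neg_neg])
    · simp only [mem_filter]
      exact fun a ⟨ha, hsa⟩ => ⟨hsa, hA a ha⟩
    · simp only [mem_filter, Prod.swap_swap]
      exact fun d ⟨hd, hdA⟩ => ⟨(hD d hd).resolve_left hdA, hd⟩
  rw [h_fwd, h_bwd, sub_neg_eq_add, sum_filter_add_sum_filter_not]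

theorem sum_mul_signedIncidence_dartProds {A : Finset (U × U)} (hA : ∀ a ∈ A, a.swap ∉ A)
    (ψ : U → ℝ) {x y : U} {p : (arcGraph A).Walk x y} (hp : p.IsPath) :
    ∑ a ∈ A, (ψ a.2 - ψ a.1) * signedIncidence (dartProds p) a = ψ y - ψ x := by
  set D := (dartProds p).toFinset
  have hsign : ∀ a, signedIncidence (dartProds p) a
      = (if a ∈ D then 1 else 0) - (if a.swap ∈ D then 1 else 0) := by
    intro a
    simp only [D, List.mem_toFinset]
    exact signedIncidence_eq_sub (hp.swap_notMem_dartProds)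
  calc ∑ a ∈ A, (ψ a.2 - ψ a.1) * signedIncidence (dartProds p) a
      = ∑ a ∈ A with a ∈ D, (ψ a.2 - ψ a.1) - ∑ a ∈ A with a.swap ∈ D, (ψ a.2 - ψ a.1) := by
        rw [sum_filter, sum_filter, ← sum_sub_distrib]
        refine sum_congr rfl fun a _ => ?_
        rw [hsign]
        split_ifs <;> ring
    _ = ∑ d ∈ D, (ψ d.2 - ψ d.1) :=
        sum_filter_mem_sub_sum_filter_swap_mem hA
          (fun _ hd => mem_or_swap_mem_of_mem_dartProds (List.mem_toFinset.1 hd)) _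
          (fun _ => (neg_sub _ _).symm)
    _ = ((dartProds p).map fun d => ψ d.2 - ψ d.1).sum := List.sum_toFinset _ hp.dartProds_nodup
    _ = ψ y - ψ x := by rw [dartProds, List.map_map]; exact p.sum_darts_sub ψ

namespace SimpleGraph

variable {V : Type*} (G : SimpleGraph V)

open Classical in
noncomputable def bridgeSide (u v w : V) : ℝ :=
  if (G.deleteEdges {s(u, v)}).Reachable v w then 1 else 0

variable {G}

theorem bridgeSide_sub_bridgeSide_self (hG : G.IsAcyclic) {u v : V} (h : G.Adj u v) :
    G.bridgeSide u v v - G.bridgeSide u v u = 1 := by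
  have hbridge := isBridge_iff.1 (isAcyclic_iff_forall_adj_isBridge.1 hG h)
  simp [bridgeSide, reachable_comm.not.1 hbridge]

theorem bridgeSide_eq_of_adj {u v x y : V} (h : G.Adj x y) (hne : s(x, y) ≠ s(u, v)) :
    G.bridgeSide u v y = G.bridgeSide u v x := by
  have hadj : (G.deleteEdges {s(u, v)}).Adj x y := deleteEdges_adj.2 ⟨h, hne⟩
  have hiff : (G.deleteEdges {s(u, v)}).Reachable v y ↔ (G.deleteEdges {s(u, v)}).Reachable v x :=
    ⟨fun r => r.trans hadj.symm.reachable, fun r => r.trans hadj.reachable⟩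
  classical exact if_congr hiff rfl rfl

end SimpleGraph

theorem IsDirTree.bridgeSide_sub_bridgeSide {A : Finset (U × U)} (hA : IsDirTree A)
    {f a : U × U} (hf : f ∈ A) (ha : a ∈ A) :
    (arcGraph A).bridgeSide f.1 f.2 a.2 - (arcGraph A).bridgeSide f.1 f.2 a.1
      = if a = f then 1 else 0 := by
  have hadj : (arcGraph A).Adj a.1 a.2 := ⟨(hA.2 a ha).1, Or.inl ha⟩
  split_ifs with h
  · subst h
    exact bridgeSide_sub_bridgeSide_self hA.1.isAcyclic hadj
  · refine sub_eq_zero.2 (bridgeSide_eq_of_adj hadj fun he => ?_)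
    rcases Sym2.eq_iff.1 he with ⟨h1, h2⟩ | ⟨h1, h2⟩
    · exact h (Prod.ext h1 h2)
    · exact (hA.2 f hf).2 ((Prod.ext h1.symm h2.symm : f.swap = a) ▸ ha)

theorem IsDirTree.signedIncidence_dartProds {A : Finset (U × U)} (hA : IsDirTree A)
    {f : U × U} (hf : f ∈ A) {x y : U} {p : (arcGraph A).Walk x y} (hp : p.IsPath) :
    signedIncidence (dartProds p) f
      = (arcGraph A).bridgeSide f.1 f.2 y - (arcGraph A).bridgeSide f.1 f.2 x := by
  rw [← sum_mul_signedIncidence_dartProds (fun a ha => (hA.2 a ha).2) _ hp,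
    sum_congr rfl fun a ha => by rw [hA.bridgeSide_sub_bridgeSide hf ha]]
  simp [hf]

end

theorem network_matrix_mul_inverse_general [DecidableEq U]
    (A₁ A₂ : Finset (U × U)) (h₁ : IsDirTree A₁) (h₂ : IsDirTree A₂)
    (M₁ : Matrix A₁ A₂ ℝ) (M₂ : Matrix A₂ A₁ ℝ)
    (hM₁ : ∀ (f : A₁) (a : A₂),
      ∀ p : (arcGraph A₁).Walk (a : U × U).1 (a : U × U).2, p.IsPath →
        M₁ f a = if (f : U × U) ∈ dartProds p then 1
          else if Prod.swap (f : U × U) ∈ dartProds p then -1 else 0)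
    (hM₂ : ∀ (f : A₂) (a : A₁),
      ∀ p : (arcGraph A₂).Walk (a : U × U).1 (a : U × U).2, p.IsPath →
        M₂ f a = if (f : U × U) ∈ dartProds p then 1
          else if Prod.swap (f : U × U) ∈ dartProds p then -1 else 0) :
    M₁ * M₂ = 1 := by
  ext f g
  set side := (arcGraph A₁).bridgeSide (f : U × U).1 (f : U × U).2
  have hM₁_side : ∀ a : A₂, M₁ f a = side (a : U × U).2 - side (a : U × U).1 := fun a => by
    obtain ⟨q, hq, -⟩ := h₁.1.existsUnique_path (a : U × U).1 (a : U × U).2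
    exact (hM₁ f a q hq).trans (h₁.signedIncidence_dartProds f.2 hq)
  obtain ⟨p, hp, -⟩ := h₂.1.existsUnique_path (g : U × U).1 (g : U × U).2
  calc (M₁ * M₂) f g
      = ∑ a ∈ A₂, (side a.2 - side a.1) * signedIncidence (dartProds p) a := by
        rw [Matrix.mul_apply, ← sum_coe_sort A₂]
        exact sum_congr rfl fun a _ => by rw [hM₁_side, hM₂ a g p hp]; rfl
    _ = side (g : U × U).2 - side (g : U × U).1 :=
        sum_mul_signedIncidence_dartProds (fun a ha => (h₂.2 a ha).2) side hp
    _ = (1 : Matrix A₁ A₁ ℝ) f g := by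
        rw [h₁.bridgeSide_sub_bridgeSide f.2 g.2, Matrix.one_apply]
        exact if_congr (eq_comm.trans Subtype.ext_iff.symm) rfl rfl

/-- If `T₁ = (U, A₁)` and `T₂ = (U, A₂)` are directed trees on the same vertex set `U`
with `|U| = n+1`, `M₁` the `A₁×A₂` network matrix of `(D₁=(U,A₂), T₁)` and `M₂` the
`A₂×A₁` network matrix of `(D₂=(U,A₁), T₂)`, then `M₁ · M₂` is the identity matrix. -/
theorem network_matrix_mul_inverse [Fintype U] [DecidableEq U] (n : ℕ)
    (hU : Fintype.card U = n + 1)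
    (A₁ A₂ : Finset (U × U)) (h₁ : IsDirTree A₁) (h₂ : IsDirTree A₂)
    (M₁ : Matrix A₁ A₂ ℝ) (M₂ : Matrix A₂ A₁ ℝ)
    (hM₁ : ∀ (f : A₁) (a : A₂),
      ∀ p : (arcGraph A₁).Walk (a : U × U).1 (a : U × U).2, p.IsPath →
        M₁ f a = if (f : U × U) ∈ dartProds p then 1
          else if Prod.swap (f : U × U) ∈ dartProds p then -1 else 0)
    (hM₂ : ∀ (f : A₂) (a : A₁),
      ∀ p : (arcGraph A₂).Walk (a : U × U).1 (a : U × U).2, p.IsPath →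
        M₂ f a = if (f : U × U) ∈ dartProds p then 1
          else if Prod.swap (f : U × U) ∈ dartProds p then -1 else 0) :
    M₁ * M₂ = 1 :=
  network_matrix_mul_inverse_general A₁ A₂ h₁ h₂ M₁ M₂ hM₁ hM₂
end

section
/- Let D = (U, A) be a directed graph with |U| = n+1, and T = (U, A₀) a directed tree. Let M be the network matrix corresponding to (D, T), with rows indexed by A₀ and columns by A. For a set B of n columns with corresponding arc set A_B ⊆ A, the submatrix M_B is nonsingular if and only if (U, A_B) is a directed tree (i.e., the underlying undirected graph of A_B is a spanning tree of U). -/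
open SimpleGraph

variable {U : Type*}

/-!
Send an arc `(u, v)` to its incidence vector `e v - e u` in `U → ℝ`. Along a tree path the signed
incidence vectors of the tree arcs telescope to that of the arc joining its ends, so column `a` of
`M` is the coordinate vector of `incVec a` in the incidence vectors of the tree `A₀`; these are
independent, hence the columns of `M_B` are independent iff the incidence vectors of `B` are.
Incidence vectors lie in the `n`-dimensional hyperplane `∑ x = 0` and span it exactly when the
arcs connect `U`, so `n` of them are independent iff they connect `U`. Independence also rules out
cycles (their signed incidence vectors sum to zero), loops and pairs of opposite arcs.
-/

section Incidence

variable [DecidableEq U]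

def incVec (a : U × U) : U → ℝ := Pi.single a.2 1 - Pi.single a.1 1

lemma incVec_swap (a : U × U) : incVec a.swap = -incVec a := (neg_sub _ _).symm

lemma incVec_self (u : U) : incVec (u, u) = 0 := sub_self _

lemma incVec_add_incVec (u v w : U) : incVec (u, v) + incVec (v, w) = incVec (u, w) := by
  simp only [incVec]; abel

lemma sum_map_incVec_dartProds {S : Finset (U × U)} {u v : U} (p : (arcGraph S).Walk u v) :
    ((dartProds p).map incVec).sum = incVec (u, v) := by
  induction p with
  | nil => simp [dartProds, incVec_self]
  | cons h q ih =>
    change incVec _ + ((dartProds q).map incVec).sum = _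
    rw [ih, incVec_add_incVec]

omit [DecidableEq U] in
lemma fst_ne_snd_of_swap_notMem {S : Finset (U × U)} {b : U × U} (hb : b ∈ S)
    (hswap : b.swap ∉ S) : b.1 ≠ b.2 :=
  fun h => hswap (by rwa [show b.swap = b from Prod.ext h.symm h])

def walkSign {S : Finset (U × U)} {u v : U} (p : (arcGraph S).Walk u v) (b : U × U) : ℝ :=
  if b ∈ dartProds p then 1 else if b.swap ∈ dartProds p then -1 else 0

lemma ite_mem_eq_count_sub_count_swap {L : List (U × U)}
    (hL : (L.map fun x => s(x.1, x.2)).Nodup) {b : U × U} (hb : b.1 ≠ b.2) :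
    (if b ∈ L then (1 : ℝ) else if b.swap ∈ L then -1 else 0) = L.count b - L.count b.swap := by
  have hnodup := hL.of_map
  by_cases hbL : b ∈ L
  · have hsL : b.swap ∉ L := fun hsL =>
      hb (congrArg Prod.fst (List.inj_on_of_nodup_map hL hbL hsL Sym2.eq_swap))
    simp [hbL, List.count_eq_one_of_mem hnodup hbL, List.count_eq_zero_of_not_mem hsL]
  · by_cases hsL : b.swap ∈ L
    · simp [hbL, hsL, List.count_eq_one_of_mem hnodup hsL, List.count_eq_zero_of_not_mem hbL]
    · simp [hbL, hsL, List.count_eq_zero_of_not_mem hsL, List.count_eq_zero_of_not_mem hbL]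

lemma sum_ite_sub_ite_smul_incVec {S : Finset (U × U)} (hS : ∀ b ∈ S, b.swap ∉ S) {x : U × U}
    (hx : x ∈ S ∨ x.swap ∈ S) :
    ∑ b ∈ S, ((if x = b then 1 else 0) - (if x = b.swap then 1 else 0) : ℝ) • incVec b
      = incVec x := by
  have hswap : ∀ b : U × U, x = b.swap ↔ x.swap = b := fun b => by
    rw [eq_comm, Prod.swap_eq_iff_eq_swap, eq_comm]
  simp only [sub_smul, ite_smul, one_smul, zero_smul, Finset.sum_sub_distrib, hswap,
    Finset.sum_ite_eq]
  rcases hx with hx | hx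
  · simp [hx, hS x hx]
  · have hxS : x ∉ S := by simpa using hS _ hx
    simp [hx, hxS, incVec_swap]

lemma sum_count_sub_count_smul_incVec {S : Finset (U × U)} (hS : ∀ b ∈ S, b.swap ∉ S)
    {L : List (U × U)} (hL : ∀ x ∈ L, x ∈ S ∨ x.swap ∈ S) :
    ∑ b ∈ S, ((L.count b : ℝ) - L.count b.swap) • incVec b = (L.map incVec).sum := by
  induction L with
  | nil => simp
  | cons x L ih =>
    rw [List.map_cons, List.sum_cons, ← ih fun y hy => hL y (List.mem_cons_of_mem x hy),
      ← sum_ite_sub_ite_smul_incVec hS (hL x List.mem_cons_self), ← Finset.sum_add_distrib]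
    refine Finset.sum_congr rfl fun b _ => ?_
    simp only [List.count_cons, beq_iff_eq, Nat.cast_add, Nat.cast_ite, Nat.cast_one,
      Nat.cast_zero, ← add_smul]
    congr 1; ring

lemma sum_walkSign_smul_incVec {S : Finset (U × U)} (hS : ∀ b ∈ S, b.swap ∉ S) {u v : U}
    (p : (arcGraph S).Walk u v) (hp : p.IsTrail) :
    ∑ b ∈ S, walkSign p b • incVec b = incVec (u, v) := by
  have hedges : ((dartProds p).map fun x => s(x.1, x.2)).Nodup := by
    rw [dartProds, List.map_map]
    exact hp.edges_nodup
  have hdarts : ∀ x ∈ dartProds p, x ∈ S ∨ x.swap ∈ S := by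
    simp only [dartProds, List.mem_map]
    rintro _ ⟨d, -, rfl⟩
    exact d.adj.2
  rw [← sum_map_incVec_dartProds p, ← sum_count_sub_count_smul_incVec hS hdarts]
  refine Finset.sum_congr rfl fun b hb => ?_
  rw [walkSign, ite_mem_eq_count_sub_count_swap hedges (fst_ne_snd_of_swap_notMem hb (hS b hb))]

lemma IsNetworkMatrix.sum_smul_incVec {A₀ Arcs : Finset (U × U)} {M : (U × U) → (U × U) → ℝ}
    (hM : IsNetworkMatrix A₀ Arcs M) (hA₀ : IsDirTree A₀) {a : U × U} (ha : a ∈ Arcs) :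
    ∑ f ∈ A₀, M f a • incVec f = incVec a := by
  obtain ⟨p, hp, -⟩ := hA₀.1.existsUnique_path a.1 a.2
  rw [Finset.sum_congr rfl fun f hf => by rw [hM f hf a ha p hp]]
  exact sum_walkSign_smul_incVec (fun b hb => (hA₀.2 b hb).2) p hp.isTrail

def sumOn (R : Finset U) : (U → ℝ) →ₗ[ℝ] ℝ := ∑ t ∈ R, LinearMap.proj t

omit [DecidableEq U] in
lemma sumOn_apply (R : Finset U) (x : U → ℝ) : sumOn R x = ∑ t ∈ R, x t := by
  simp [sumOn]

lemma sumOn_incVec (R : Finset U) (b : U × U) :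
    sumOn R (incVec b) = (if b.2 ∈ R then 1 else 0) - (if b.1 ∈ R then 1 else 0) := by
  simp [sumOn_apply, incVec, Finset.sum_sub_distrib, Pi.single_apply]

lemma span_incVec_le_ker_sumOn {S : Finset (U × U)} {R : Finset U}
    (hR : ∀ b ∈ S, b.1 ∈ R ↔ b.2 ∈ R) :
    Submodule.span ℝ (incVec '' S) ≤ LinearMap.ker (sumOn R) := by
  rw [Submodule.span_le]
  rintro _ ⟨b, hb, rfl⟩
  simp [sumOn_incVec, hR b hb]

lemma incVec_mem_span_of_reachable {S : Finset (U × U)} {u w : U}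
    (h : (arcGraph S).Reachable u w) : incVec (u, w) ∈ Submodule.span ℝ (incVec '' S) := by
  obtain ⟨p⟩ := h
  induction p with
  | nil => simp [incVec_self]
  | @cons u v w huv q ih =>
    rw [← incVec_add_incVec u v w]
    refine add_mem ?_ ih
    rcases huv.2 with huv | hvu
    · exact Submodule.subset_span ⟨_, huv, rfl⟩
    · rw [← neg_neg (incVec (u, v)), ← incVec_swap]
      exact neg_mem (Submodule.subset_span ⟨_, hvu, rfl⟩)

lemma swap_notMem_of_linearIndepOn_incVec {S : Finset (U × U)}
    (h : LinearIndepOn ℝ incVec (S : Set (U × U))) : ∀ b ∈ S, b.swap ∉ S := by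
  intro b hb hswap
  by_cases hloop : b = b.swap
  · have hb_eq : b = (b.1, b.1) := Prod.ext rfl (congrArg Prod.fst hloop).symm
    exact h.ne_zero hb (by rw [hb_eq, incVec_self])
  · have hpair : ({b, b.swap} : Set (U × U)) ⊆ S := Set.insert_subset_iff.2 ⟨hb, by simpa⟩
    have := (LinearIndepOn.pair_iff incVec hloop).1 (h.mono hpair) 1 1 (by simp [incVec_swap])
    simp at this

lemma isAcyclic_of_linearIndepOn_incVec {S : Finset (U × U)} (hS : ∀ b ∈ S, b.swap ∉ S)
    (h : LinearIndepOn ℝ incVec (S : Set (U × U))) : (arcGraph S).IsAcyclic := by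
  intro v c hc
  have hsum := sum_walkSign_smul_incVec hS c hc.isTrail
  rw [incVec_self] at hsum
  have hsign := linearIndepOn_finset_iff.1 h _ hsum
  let d := c.firstDart hc.not_nil
  have hd : d.toProd ∈ dartProds c := List.mem_map_of_mem (Walk.firstDart_mem_darts _)
  rcases d.adj.2 with hdS | hdS
  · simpa [walkSign, hd] using hsign _ hdS
  · have := hsign d.toProd.swap hdS
    simp only [walkSign, Prod.swap_swap, hd] at this
    split_ifs at this <;> norm_num at this

variable [Fintype U]

lemma reachable_of_incVec_mem_span {S : Finset (U × U)} {u w : U}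
    (h : incVec (u, w) ∈ Submodule.span ℝ (incVec '' S)) : (arcGraph S).Reachable u w := by
  classical
  let R := Finset.univ.filter ((arcGraph S).Reachable u)
  have hR : ∀ b ∈ S, b.1 ∈ R ↔ b.2 ∈ R := by
    intro b hb
    by_cases hloop : b.1 = b.2
    · rw [hloop]
    · have hadj : (arcGraph S).Adj b.1 b.2 := ⟨hloop, Or.inl hb⟩
      simp only [R, Finset.mem_filter, Finset.mem_univ, true_and]
      exact ⟨fun h => h.trans hadj.reachable, fun h => h.trans hadj.symm.reachable⟩
  by_contra hnot
  simpa [sumOn_incVec, R, hnot] using span_incVec_le_ker_sumOn hR h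

lemma ker_sumOn_univ_le_span [Nonempty U] {S : Finset (U × U)}
    (hS : (arcGraph S).Preconnected) :
    LinearMap.ker (sumOn (Finset.univ : Finset U)) ≤ Submodule.span ℝ (incVec '' S) := by
  intro x hx
  obtain ⟨u₀⟩ := ‹Nonempty U›
  have hx : x = ∑ u, x u • incVec (u₀, u) := by
    rw [LinearMap.mem_ker, sumOn_apply] at hx
    ext t
    simp [incVec, smul_sub, Finset.sum_sub_distrib, hx, Pi.single_apply]
  rw [hx]
  exact Submodule.sum_mem _ fun u _ =>
    Submodule.smul_mem _ _ (incVec_mem_span_of_reachable (hS u₀ u))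

lemma finrank_ker_sumOn_univ [Nonempty U] :
    Module.finrank ℝ (LinearMap.ker (sumOn (Finset.univ : Finset U))) + 1 = Fintype.card U := by
  obtain ⟨u⟩ := ‹Nonempty U›
  have hsurj : Function.Surjective (sumOn (Finset.univ : Finset U)) :=
    fun r => ⟨Pi.single u r, by simp [sumOn_apply]⟩
  have := LinearMap.finrank_range_add_finrank_ker (sumOn (Finset.univ : Finset U))
  rw [LinearMap.range_eq_top.mpr hsurj, finrank_top, Module.finrank_self,
    Module.finrank_fintype_fun_eq_card] at this
  omega

lemma span_incVec_eq_ker_iff_preconnected [Nonempty U] {S : Finset (U × U)} :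
    Submodule.span ℝ (incVec '' S) = LinearMap.ker (sumOn (Finset.univ : Finset U)) ↔
      (arcGraph S).Preconnected := by
  refine ⟨fun h u w => reachable_of_incVec_mem_span ?_, fun h => ?_⟩
  · rw [h, LinearMap.mem_ker, sumOn_incVec]
    simp
  · exact le_antisymm (span_incVec_le_ker_sumOn (by simp)) (ker_sumOn_univ_le_span h)

lemma linearIndepOn_incVec_iff_preconnected {S : Finset (U × U)}
    (hcard : S.card + 1 = Fintype.card U) :
    LinearIndepOn ℝ incVec (S : Set (U × U)) ↔ (arcGraph S).Preconnected := by
  have : Nonempty U := Fintype.card_pos_iff.mp (by omega)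
  have hle := span_incVec_le_ker_sumOn (S := S) (R := Finset.univ) (by simp)
  have hker := finrank_ker_sumOn_univ (U := U)
  rw [← span_incVec_eq_ker_iff_preconnected, LinearIndepOn,
    linearIndependent_iff_card_eq_finrank_span, Set.finrank, ← Set.image_eq_range]
  simp only [Finset.coe_sort_coe, Fintype.card_coe]
  exact ⟨fun h => Submodule.eq_of_le_of_finrank_eq hle (by omega), fun h => by rw [h]; omega⟩

theorem linearIndepOn_incVec_iff_isDirTree {S : Finset (U × U)}
    (hcard : S.card + 1 = Fintype.card U) :
    LinearIndepOn ℝ incVec (S : Set (U × U)) ↔ IsDirTree S := by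
  refine ⟨fun h => ?_, fun h =>
    (linearIndepOn_incVec_iff_preconnected hcard).2 h.1.connected.preconnected⟩
  have hS := swap_notMem_of_linearIndepOn_incVec h
  have : Nonempty U := Fintype.card_pos_iff.mp (by omega)
  refine ⟨⟨(connected_iff _).2 ⟨(linearIndepOn_incVec_iff_preconnected hcard).1 h, this⟩,
    isAcyclic_of_linearIndepOn_incVec hS h⟩,
    fun b hb => ⟨fst_ne_snd_of_swap_notMem hb (hS b hb), hS b hb⟩⟩

end Incidence

/-- Spanning-tree characterization of cardinal bases of a network matrix: for a set `B`
of `n` columns (arcs of `D`), the corresponding submatrix has full rank (equivalently, its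
columns are linearly independent) iff `(U, A_B)` is a directed tree, i.e. the underlying
undirected graph of `B` is a spanning tree of `U`. -/
theorem network_basis_iff_spanning_tree [Fintype U] [DecidableEq U] (n : ℕ)
    (hU : Fintype.card U = n + 1)
    (A₀ Arcs : Finset (U × U)) (hA₀ : IsDirTree A₀) (hA₀card : A₀.card = n)
    (M : (U × U) → (U × U) → ℝ) (hM : IsNetworkMatrix A₀ Arcs M)
    (B : Finset (U × U)) (hBsub : B ⊆ Arcs) (hBcard : B.card = n) :
    LinearIndependent ℝ (fun b : B => fun f : A₀ => M (f : U × U) (b : U × U)) ↔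
      IsDirTree B := by
  let L := Fintype.linearCombination ℝ fun f : A₀ => incVec (f : U × U)
  have hL : Function.Injective L := linearIndependent_iff_injective_fintypeLinearCombination.1
    ((linearIndepOn_incVec_iff_isDirTree (by omega)).2 hA₀)
  have hcol : L ∘ (fun b : B => fun f : A₀ => M f b) = fun b : B => incVec (b : U × U) := by
    funext b
    rw [Function.comp_apply, Fintype.linearCombination_apply,
      Finset.sum_coe_sort A₀ fun f => M f b • incVec f]
    exact hM.sum_smul_incVec hA₀ (hBsub b.2)
  rw [← LinearMap.linearIndependent_iff_of_injOn L hL.injOn, hcol]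
  exact linearIndepOn_incVec_iff_isDirTree (by omega)
end

section
/- Let M be a {0,1}-valued network matrix with n rows, and b ∈ ℤ^n. Then every extreme point (vertex) of the polyhedron {x ≥ 0 : Mx = b} is an integer vector. -/
open SimpleGraph

variable {U : Type*}

/-!
Since `M` has no entry `-1`, the tree path of every arc `a = (u, v)` of `D` runs forward from `u`
to `v`. Two consequences: the net flow `N x` of `x` at each vertex (with `N` the vertex–arc
incidence matrix of `D`) is an integral combination of the entries of `M x = b`, and each row of
`M` is a combination of rows of `N` (take the potential that is `1` on the far side of the tree
arc), so `N d = 0` forces `M d = 0`.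

If an extreme point `x` were fractional, integrality of `N x` means no vertex meets exactly one
fractional arc; the fractional arcs then touch at most as many vertices as there are of them,
so they carry a nonzero circulation `d`. Both `x + ε d` and `x - ε d` lie in the polyhedron for
small `ε > 0`, contradicting extremality.
-/

open Finset Filter Topology

theorem exists_pos_forall_nonneg_add_sub {ι : Type*} (S : Finset ι) {x : ι → ℝ}
    (hx : ∀ i ∈ S, 0 < x i) (d : ι → ℝ) :
    ∃ ε > 0, ∀ i ∈ S, 0 ≤ x i + ε * d i ∧ 0 ≤ x i - ε * d i := by
  have hnear : ∀ᶠ ε in 𝓝 (0 : ℝ), ∀ i ∈ S, 0 < x i + ε * d i ∧ 0 < x i - ε * d i :=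
    (eventually_all_finset S).2 fun i hi =>
      (ContinuousAt.eventually_lt continuousAt_const (by fun_prop) (by simpa using hx i hi)).and
        (ContinuousAt.eventually_lt continuousAt_const (by fun_prop) (by simpa using hx i hi))
  obtain ⟨δ, hδ, hball⟩ := Metric.eventually_nhds_iff.1 hnear
  refine ⟨δ / 2, half_pos hδ, fun i hi => ?_⟩
  have hpos := hball (y := δ / 2)
    (by rw [Real.dist_0_eq_abs, abs_of_pos (half_pos hδ)]; exact half_lt_self hδ) i hi
  exact ⟨hpos.1.le, hpos.2.le⟩

theorem direction_eq_zero_of_extreme {ι κ : Type*} {C S : Finset ι} {R : Finset κ}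
    {M : κ → ι → ℝ} {c : κ → ℝ} {P : (ι → ℝ) → Prop}
    (hP : ∀ x, P x ↔ ((∀ a, 0 ≤ x a) ∧ (∀ a, a ∉ C → x a = 0) ∧
      ∀ f ∈ R, ∑ a ∈ C, M f a * x a = c f))
    {x : ι → ℝ} (hx : P x) (hext : ∀ y z, P y → P z → x = (fun a => (y a + z a) / 2) → y = z)
    (hSC : S ⊆ C) (hxS : ∀ a ∈ S, 0 < x a) {d : ι → ℝ} (hdS : ∀ a ∉ S, d a = 0)
    (hker : ∀ f ∈ R, ∑ a ∈ S, M f a * d a = 0) : d = 0 := by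
  obtain ⟨hx0, hxC, hxc⟩ := (hP x).1 hx
  have hkerC : ∀ f ∈ R, ∑ a ∈ C, M f a * d a = 0 := fun f hf => by
    rw [← sum_subset hSC fun a _ ha => by rw [hdS a ha, mul_zero], hker f hf]
  have hmove : ∀ t : ℝ, (∀ a ∈ S, 0 ≤ x a + t * d a) → P (fun a => x a + t * d a) := by
    intro t ht
    refine (hP _).2 ⟨fun a => ?_, fun a ha => ?_, fun f hf => ?_⟩
    · by_cases haS : a ∈ S
      · exact ht a haS
      · simpa [hdS a haS] using hx0 a
    · simp [hdS a fun haS => ha (hSC haS), hxC a ha]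
    · simp only [mul_add, sum_add_distrib, hxc f hf, mul_left_comm _ t, ← mul_sum, hkerC f hf,
        mul_zero, add_zero]
  obtain ⟨ε, hε, hεS⟩ := exists_pos_forall_nonneg_add_sub S hxS d
  have hyz := hext _ _ (hmove ε fun a ha => (hεS a ha).1)
    (hmove (-ε) fun a ha => by simpa [sub_eq_add_neg] using (hεS a ha).2)
    (funext fun a => by ring)
  funext a
  have hεd : ε * d a = 0 := by linarith [congrFun hyz a]
  simpa [hε.ne'] using hεd

namespace SimpleGraph

variable {V : Type*} {G : SimpleGraph V}

theorem Walk.sum_map_darts_sub {M : Type*} [AddCommGroup M] (ψ : V → M) {u v : V}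
    (p : G.Walk u v) : (p.darts.map fun d => ψ d.snd - ψ d.fst).sum = ψ v - ψ u := by
  induction p with
  | nil => simp
  | cons h q ih => simp [ih]

theorem Walk.IsTrail.symm_notMem_darts {u v : V} {p : G.Walk u v} (hp : p.IsTrail)
    {d : G.Dart} (hd : d ∈ p.darts) : d.symm ∉ p.darts := fun hd' =>
  d.symm_ne (List.inj_on_of_nodup_map hp.edges_nodup hd' hd d.edge_symm)

end SimpleGraph

section Incidence

variable [DecidableEq U]

def incidence (a : U × U) (w : U) : ℝ :=
  (if a.1 = w then 1 else 0) - (if a.2 = w then 1 else 0)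

theorem incidence_mem_bot (a : U × U) (w : U) : incidence a w ∈ (⊥ : Subring ℝ) := by
  unfold incidence
  split_ifs <;> simp

theorem sum_mul_incidence [Fintype U] (φ : U → ℝ) (a : U × U) :
    ∑ w, φ w * incidence a w = φ a.1 - φ a.2 := by
  simp [incidence, mul_sub, sum_sub_distrib]

theorem sum_sum_mul_incidence [Fintype U] (S : Finset (U × U)) (d : U × U → ℝ) :
    ∑ w, ∑ a ∈ S, d a * incidence a w = 0 := by
  have hrow : ∀ a, ∑ w, incidence a w = 0 := fun a => by
    simpa using sum_mul_incidence (fun _ : U => (1 : ℝ)) a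
  rw [sum_comm]
  simp [← mul_sum, hrow]

theorem sum_mul_incidence_eq_sub (S : Finset (U × U)) (x : U × U → ℝ) (w : U) :
    ∑ a ∈ S, x a * incidence a w = ∑ a ∈ S with a.1 = w, x a - ∑ a ∈ S with a.2 = w, x a := by
  simp [incidence, mul_sub, sum_sub_distrib, sum_filter]

def arcDegree (S : Finset (U × U)) (w : U) : ℕ :=
  #{a ∈ S | a.1 = w} + #{a ∈ S | a.2 = w}

theorem sum_arcDegree [Fintype U] (S : Finset (U × U)) : ∑ w, arcDegree S w = 2 * #S := by
  unfold arcDegree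
  simp only [sum_add_distrib, ← card_eq_sum_card_fiberwise (fun _ _ => mem_univ _)]
  ring

theorem card_filter_arcDegree_pos_le [Fintype U] {S : Finset (U × U)}
    (hS : ∀ w, arcDegree S w ≠ 1) : #{w | 0 < arcDegree S w} ≤ #S := by
  set V : Finset U := {w | 0 < arcDegree S w}
  have hV : ∀ w ∈ V, 2 ≤ arcDegree S w := fun w hw => by
    have := (mem_filter.1 hw).2
    have := hS w
    omega
  have : 2 * #V ≤ 2 * #S := calc
    2 * #V = ∑ _w ∈ V, 2 := by rw [sum_const, smul_eq_mul, mul_comm]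
    _ ≤ ∑ w ∈ V, arcDegree S w := sum_le_sum hV
    _ ≤ ∑ w, arcDegree S w := sum_le_sum_of_subset (subset_univ V)
    _ = 2 * #S := sum_arcDegree S
  omega

theorem sum_mul_incidence_eq_zero_of_arcDegree_eq_zero {S : Finset (U × U)} {w : U}
    (hw : arcDegree S w = 0) (x : U × U → ℝ) : ∑ a ∈ S, x a * incidence a w = 0 := by
  obtain ⟨hout, hin⟩ : #{a ∈ S | a.1 = w} = 0 ∧ #{a ∈ S | a.2 = w} = 0 := by
    unfold arcDegree at hw
    omega
  rw [sum_mul_incidence_eq_sub, card_eq_zero.1 hout, card_eq_zero.1 hin]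
  simp

theorem arcDegree_ne_one_of_sum_mul_incidence_mem_bot {C S : Finset (U × U)} {x : U × U → ℝ}
    (hSC : S ⊆ C) (hS : ∀ a ∈ S, x a ∉ (⊥ : Subring ℝ))
    (hCS : ∀ a ∈ C \ S, x a ∈ (⊥ : Subring ℝ))
    (hx : ∀ w, ∑ a ∈ C, x a * incidence a w ∈ (⊥ : Subring ℝ)) (w : U) : arcDegree S w ≠ 1 := by
  have hSw : ∑ a ∈ S, x a * incidence a w ∈ (⊥ : Subring ℝ) := by
    have hint : ∑ a ∈ C \ S, x a * incidence a w ∈ (⊥ : Subring ℝ) :=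
      Subring.sum_mem _ fun a ha => Subring.mul_mem _ (hCS a ha) (incidence_mem_bot a w)
    have := Subring.sub_mem _ (hx w) hint
    rwa [← sum_sdiff hSC, add_sub_cancel_left] at this
  intro hdeg
  rw [sum_mul_incidence_eq_sub] at hSw
  rcases Nat.add_eq_one_iff.1 hdeg with ⟨hout, hin⟩ | ⟨hout, hin⟩
  · obtain ⟨a, ha⟩ := card_eq_one.1 hin
    have haS : a ∈ S := (mem_filter.1 (ha ▸ mem_singleton_self a)).1
    rw [card_eq_zero.1 hout, ha, sum_empty, sum_singleton, zero_sub] at hSw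
    exact hS a haS (neg_neg (x a) ▸ Subring.neg_mem _ hSw)
  · obtain ⟨a, ha⟩ := card_eq_one.1 hout
    have haS : a ∈ S := (mem_filter.1 (ha ▸ mem_singleton_self a)).1
    rw [card_eq_zero.1 hin, ha, sum_empty, sum_singleton, sub_zero] at hSw
    exact hS a haS hSw

theorem exists_circulation [Fintype U] {S : Finset (U × U)} (hS : S.Nonempty)
    (hdeg : ∀ w, arcDegree S w ≠ 1) :
    ∃ d : U × U → ℝ, (∀ a ∉ S, d a = 0) ∧ d ≠ 0 ∧ ∀ w, ∑ a ∈ S, d a * incidence a w = 0 := by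
  obtain ⟨a₀, ha₀⟩ := hS
  set V : Finset U := {w | 0 < arcDegree S w}
  have ha₀V : a₀.1 ∈ V := by
    have : 0 < #{a ∈ S | a.1 = a₀.1} := card_pos.2 ⟨a₀, mem_filter.2 ⟨ha₀, rfl⟩⟩
    exact mem_filter.2 ⟨mem_univ _, by unfold arcDegree; omega⟩
  -- the equation at `a₀.1` is dropped: it follows from the others since the rows sum to zero
  have hdep : ¬ LinearIndepOn ℝ (fun (a : U × U) (w : V.erase a₀.1) => incidence a w)
      (S : Set (U × U)) := fun hli => by
      have := hli.fintype_card_le_finrank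
      simp only [Module.finrank_fintype_fun_eq_card, Finset.coe_sort_coe, Fintype.card_coe,
        card_erase_of_mem ha₀V] at this
      have : #V ≤ #S := card_filter_arcDegree_pos_le hdeg
      have := card_pos.2 ⟨_, ha₀V⟩
      omega
  obtain ⟨g, hg, a₁, ha₁, hg₁⟩ := not_linearIndepOn_finset_iff.1 hdep
  refine ⟨fun a => if a ∈ S then g a else 0, fun a ha => if_neg ha,
    fun h => hg₁ (by simpa [ha₁] using congrFun h a₁), ?_⟩
  have hrestrict : ∀ w, ∑ a ∈ S, (if a ∈ S then g a else 0) * incidence a w =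
      ∑ a ∈ S, g a * incidence a w := fun w => sum_congr rfl fun a ha => by rw [if_pos ha]
  simp only [hrestrict]
  have hne : ∀ w ≠ a₀.1, ∑ a ∈ S, g a * incidence a w = 0 := by
    intro w hw
    by_cases hwV : w ∈ V
    · simpa using congrFun hg ⟨w, mem_erase.2 ⟨hw, hwV⟩⟩
    · exact sum_mul_incidence_eq_zero_of_arcDegree_eq_zero (by simpa [V] using hwV) g
  intro w
  by_cases hw : w = a₀.1
  · rw [hw, ← sum_eq_single_of_mem a₀.1 (mem_univ _) fun w _ => hne w]
    exact sum_sum_mul_incidence S g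
  · exact hne w hw

end Incidence

section NetworkMatrix

variable [DecidableEq U] {A₀ Arcs : Finset (U × U)} {M : (U × U) → (U × U) → ℝ}

theorem swap_notMem_dartProds_of_mem {u v : U} {p : (arcGraph A₀).Walk u v} (hp : p.IsTrail)
    {f : U × U} (hf : f ∈ dartProds p) : f.swap ∉ dartProds p := by
  obtain ⟨d, hd, rfl⟩ := List.mem_map.1 hf
  rintro hswap
  obtain ⟨d', hd', he⟩ := List.mem_map.1 hswap
  obtain rfl : d' = d.symm := Dart.toProd_injective he
  exact hp.symm_notMem_darts hd hd'

theorem IsNetworkMatrix.exists_forward_path (hA₀ : IsDirTree A₀)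
    (hM : IsNetworkMatrix A₀ Arcs M) (hM01 : ∀ f a, M f a = 0 ∨ M f a = 1) {a : U × U}
    (ha : a ∈ Arcs) :
    ∃ p : (arcGraph A₀).Walk a.1 a.2, p.IsPath ∧ ∀ d ∈ p.darts, d.toProd ∈ A₀ := by
  obtain ⟨q⟩ := hA₀.1.connected.preconnected a.1 a.2
  refine ⟨q.toPath, q.toPath.2, fun d hd => d.adj.2.resolve_right fun hback => ?_⟩
  -- a backward tree arc on the path would give the entry `-1`
  have hfwd : d.toProd ∈ dartProds q.toPath.1 := List.mem_map_of_mem hd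
  have hval := hM d.toProd.swap hback a ha _ q.toPath.2
  rw [Prod.swap_swap, if_neg (swap_notMem_dartProds_of_mem q.toPath.2.isTrail hfwd),
    if_pos hfwd] at hval
  rcases hM01 d.toProd.swap a with h | h <;> rw [hval] at h <;> norm_num at h

theorem IsNetworkMatrix.sum_sub_mul_eq_sub (hA₀ : IsDirTree A₀) (hM : IsNetworkMatrix A₀ Arcs M)
    (hM01 : ∀ f a, M f a = 0 ∨ M f a = 1) {a : U × U} (ha : a ∈ Arcs) (ψ : U → ℝ) :
    ∑ f ∈ A₀, (ψ f.2 - ψ f.1) * M f a = ψ a.2 - ψ a.1 := by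
  obtain ⟨p, hp, hfwd⟩ := hM.exists_forward_path hA₀ hM01 ha
  have hM_eq : ∀ f ∈ A₀, M f a = if f ∈ dartProds p then 1 else 0 := fun f hf => by
    have hswap : f.swap ∉ dartProds p := fun hswap => (hA₀.2 f hf).2 <| by
      obtain ⟨d, hd, he⟩ := List.mem_map.1 hswap
      exact he ▸ hfwd d hd
    rw [hM f hf a ha p hp, if_neg hswap]
  have hpath : {f ∈ A₀ | f ∈ dartProds p} = (dartProds p).toFinset := by
    ext f
    simp only [mem_filter, List.mem_toFinset, and_iff_right_iff_imp]
    intro hf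
    obtain ⟨d, hd, rfl⟩ := List.mem_map.1 hf
    exact hfwd d hd
  have hnodup : (dartProds p).Nodup := (List.nodup_map_iff Dart.toProd_injective).2
    (Walk.darts_nodup_of_support_nodup hp.support_nodup)
  calc ∑ f ∈ A₀, (ψ f.2 - ψ f.1) * M f a
      = ∑ f ∈ A₀ with f ∈ dartProds p, (ψ f.2 - ψ f.1) := by
        rw [sum_filter]
        exact sum_congr rfl fun f hf => by rw [hM_eq f hf]; split_ifs <;> simp
    _ = ψ a.2 - ψ a.1 := by
        rw [hpath, List.sum_toFinset _ hnodup, dartProds, List.map_map]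
        exact Walk.sum_map_darts_sub ψ p

theorem IsDirTree.exists_potential_sub_eq_ite (hA₀ : IsDirTree A₀) {f : U × U} (hf : f ∈ A₀) :
    ∃ φ : U → ℝ, ∀ g ∈ A₀, φ g.2 - φ g.1 = if g = f then 1 else 0 := by
  classical
  obtain ⟨u, v⟩ := f
  set H := (arcGraph A₀).deleteEdges {s(u, v)}
  have hcut : ¬ H.Reachable u v := isBridge_iff.1 <|
    isAcyclic_iff_forall_adj_isBridge.1 hA₀.1.isAcyclic ⟨(hA₀.2 _ hf).1, Or.inl hf⟩
  refine ⟨fun w => if H.Reachable w v then 1 else 0, fun g hg => ?_⟩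
  by_cases hgf : g = (u, v)
  · subst hgf
    simp [hcut]
  · have hadj : H.Adj g.1 g.2 := by
      refine (deleteEdges_adj ..).2 ⟨⟨(hA₀.2 g hg).1, Or.inl hg⟩, ?_⟩
      rw [Set.mem_singleton_iff, Sym2.eq_iff]
      rintro (⟨h1, h2⟩ | ⟨h1, h2⟩)
      · exact hgf (Prod.ext h1 h2)
      · exact (hA₀.2 _ hf).2 (by simpa [← h1, ← h2] using hg)
    have hside : H.Reachable g.2 v ↔ H.Reachable g.1 v :=
      ⟨hadj.reachable.trans, hadj.symm.reachable.trans⟩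
    simp [hgf, hside]

theorem IsNetworkMatrix.incidence_eq_sum (hA₀ : IsDirTree A₀) (hM : IsNetworkMatrix A₀ Arcs M)
    (hM01 : ∀ f a, M f a = 0 ∨ M f a = 1) {a : U × U} (ha : a ∈ Arcs) (w : U) :
    incidence a w = ∑ f ∈ A₀, incidence f w * M f a := by
  set ψ : U → ℝ := fun u => -(if u = w then 1 else 0)
  have hψ : ∀ e : U × U, incidence e w = ψ e.2 - ψ e.1 := fun e => by
    simp only [incidence, ψ]
    ring
  simp only [hψ]
  exact (hM.sum_sub_mul_eq_sub hA₀ hM01 ha ψ).symm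

theorem IsNetworkMatrix.sum_mul_incidence_eq (hA₀ : IsDirTree A₀)
    (hM : IsNetworkMatrix A₀ Arcs M) (hM01 : ∀ f a, M f a = 0 ∨ M f a = 1) {x y : U × U → ℝ}
    (hx : ∀ f ∈ A₀, ∑ a ∈ Arcs, M f a * x a = y f) (w : U) :
    ∑ a ∈ Arcs, x a * incidence a w = ∑ f ∈ A₀, y f * incidence f w := calc
  ∑ a ∈ Arcs, x a * incidence a w = ∑ a ∈ Arcs, x a * ∑ f ∈ A₀, incidence f w * M f a :=
    sum_congr rfl fun a ha => by rw [hM.incidence_eq_sum hA₀ hM01 ha]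
  _ = ∑ f ∈ A₀, (∑ a ∈ Arcs, M f a * x a) * incidence f w := by
    simp_rw [mul_sum, sum_mul]
    rw [sum_comm]
    exact sum_congr rfl fun _ _ => sum_congr rfl fun _ _ => by ring
  _ = ∑ f ∈ A₀, y f * incidence f w := sum_congr rfl fun f hf => by rw [hx f hf]

theorem IsNetworkMatrix.exists_eq_sum_mul_incidence [Fintype U] (hA₀ : IsDirTree A₀)
    (hM : IsNetworkMatrix A₀ Arcs M) (hM01 : ∀ f a, M f a = 0 ∨ M f a = 1) {f : U × U}
    (hf : f ∈ A₀) : ∃ φ : U → ℝ, ∀ a ∈ Arcs, M f a = ∑ w, φ w * incidence a w := by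
  obtain ⟨φ, hφ⟩ := hA₀.exists_potential_sub_eq_ite hf
  refine ⟨-φ, fun a ha => ?_⟩
  have h := hM.sum_sub_mul_eq_sub hA₀ hM01 ha φ
  rw [sum_congr rfl fun g hg => by rw [hφ g hg]] at h
  simp only [ite_mul, one_mul, zero_mul, sum_ite_eq', if_pos hf] at h
  rw [sum_mul_incidence, h, Pi.neg_apply, Pi.neg_apply]
  ring

theorem IsNetworkMatrix.sum_mul_eq_zero_of_circulation [Fintype U] (hA₀ : IsDirTree A₀)
    (hM : IsNetworkMatrix A₀ Arcs M) (hM01 : ∀ f a, M f a = 0 ∨ M f a = 1)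
    {S : Finset (U × U)} (hS : S ⊆ Arcs) {d : U × U → ℝ}
    (hd : ∀ w, ∑ a ∈ S, d a * incidence a w = 0) {f : U × U} (hf : f ∈ A₀) :
    ∑ a ∈ S, M f a * d a = 0 := by
  obtain ⟨φ, hφ⟩ := hM.exists_eq_sum_mul_incidence hA₀ hM01 hf
  calc ∑ a ∈ S, M f a * d a = ∑ w, φ w * ∑ a ∈ S, d a * incidence a w := by
        simp_rw [mul_sum]
        rw [sum_comm]
        refine sum_congr rfl fun a ha => ?_
        rw [hφ a (hS ha), sum_mul]
        exact sum_congr rfl fun _ _ => by ring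
    _ = 0 := by simp [hd]

end NetworkMatrix

/-- Every extreme point of `{x ≥ 0 : Mx = b}` for a `{0,1}`-valued network matrix `M`
and integral right-hand side `b` is an integer vector. -/
theorem network_polyhedron_extreme_point_integral [Fintype U] [DecidableEq U]
    (A₀ Arcs : Finset (U × U)) (hA₀ : IsDirTree A₀)
    (M : (U × U) → (U × U) → ℝ) (hM : IsNetworkMatrix A₀ Arcs M)
    (hM01 : ∀ f a, M f a = 0 ∨ M f a = 1)
    (b : (U × U) → ℤ)
    (P : ((U × U) → ℝ) → Prop)
    (hP : ∀ x, P x ↔ ((∀ a, 0 ≤ x a) ∧ (∀ a, a ∉ Arcs → x a = 0) ∧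
      ∀ f ∈ A₀, ∑ a ∈ Arcs, M f a * x a = (b f : ℝ)))
    (x : (U × U) → ℝ) (hx : P x)
    (hext : ∀ y z, P y → P z → x = (fun a => (y a + z a) / 2) → y = z) :
    ∀ a, ∃ k : ℤ, x a = (k : ℝ) := by
  classical
  obtain ⟨hx0, hxArcs, hxb⟩ := (hP x).1 hx
  have hflow : ∀ w, ∑ a ∈ Arcs, x a * incidence a w ∈ (⊥ : Subring ℝ) := fun w => by
    rw [hM.sum_mul_incidence_eq hA₀ hM01 hxb w]
    exact Subring.sum_mem _ fun f _ =>
      Subring.mul_mem _ (intCast_mem _ _) (incidence_mem_bot f w)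
  set S := {a ∈ Arcs | x a ∉ (⊥ : Subring ℝ)}
  have hSArcs : S ⊆ Arcs := filter_subset _ _
  intro a₀
  by_contra! hfrac
  have ha₀ : a₀ ∈ S := mem_filter.2
    ⟨by_contra fun h => hfrac 0 (by simp [hxArcs a₀ h]),
      fun h => by obtain ⟨k, hk⟩ := Subring.mem_bot.1 h; exact hfrac k hk.symm⟩
  have hdeg := arcDegree_ne_one_of_sum_mul_incidence_mem_bot hSArcs
    (fun a ha => (mem_filter.1 ha).2)
    (fun a ha => by_contra fun h => (mem_sdiff.1 ha).2 (mem_filter.2 ⟨(mem_sdiff.1 ha).1, h⟩))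
    hflow
  obtain ⟨d, hdS, hd0, hcirc⟩ := exists_circulation ⟨a₀, ha₀⟩ hdeg
  refine hd0 (direction_eq_zero_of_extreme hP hx hext hSArcs (fun a ha => ?_) hdS
    fun f hf => hM.sum_mul_eq_zero_of_circulation hA₀ hM01 hSArcs hcirc hf)
  exact (hx0 a).lt_of_ne fun h => (mem_filter.1 ha).2 (h ▸ zero_mem _)
end

section
/- Let T = (U, A₀) be an arborescence with root r, B a cardinal basis of the network matrix of (D,T) such that T_B = (U, A_B) is a directed tree, and let (v,v') be an arc of D (so the T-path from v to v' is directed, hence v ≥_T v'). Then the unique T_B-path from v to v' contains at least one forward arc. -/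
open SimpleGraph

variable {U : Type*}

/-- The directed-step relation of an arc set. -/
def stepRel (A : Finset (U × U)) : U → U → Prop := fun a b => (a, b) ∈ A

/-!
If the `T_B`-path from `v` to `v'` had only backward arcs, each of them, being an arc of `D`,
would span a directed `T`-path pointing back along it, so `v'` would reach `v` in `T`.
Together with the directed `T`-path from `v` to `v'` this is a directed closed walk in `T`,
impossible in a directed tree: walking the two directions gives two `v`–`v'` walks whose
underlying paths coincide, and a dart of that path would be an arc of `T` in both orientations.
-/

section

variable [DecidableEq U] {A B : Finset (U × U)}

lemma exists_walk_forall_darts_mem_of_reflTransGen (hloop : ∀ e ∈ A, e.1 ≠ e.2) {x y : U}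
    (h : Relation.ReflTransGen (stepRel A) x y) :
    ∃ w : (arcGraph A).Walk x y, ∀ d ∈ w.darts, d.toProd ∈ A := by
  induction h with
  | refl => exact ⟨.nil, by simp⟩
  | tail _ hstep ih =>
    obtain ⟨w, hw⟩ := ih
    have hadj : (arcGraph A).Adj _ _ := ⟨hloop _ hstep, Or.inl hstep⟩
    refine ⟨w.concat hadj, fun d hd => ?_⟩
    rw [Walk.darts_concat, List.concat_eq_append, List.mem_append, List.mem_singleton] at hd
    rcases hd with hd | rfl
    · exact hw d hd
    · exact hstep

lemma IsDirTree.reflTransGen_antisymm (hA : IsDirTree A) {x y : U}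
    (hxy : Relation.ReflTransGen (stepRel A) x y)
    (hyx : Relation.ReflTransGen (stepRel A) y x) : x = y := by
  have hloop : ∀ e ∈ A, e.1 ≠ e.2 := fun e he => (hA.2 e he).1
  obtain ⟨w₁, hw₁⟩ := exists_walk_forall_darts_mem_of_reflTransGen hloop hxy
  obtain ⟨w₂, hw₂⟩ := exists_walk_forall_darts_mem_of_reflTransGen hloop hyx
  have hpath : w₁.bypass = w₂.reverse.bypass :=
    congrArg Subtype.val <| (hA.1.isAcyclic.subsingleton_path x y).elim
      ⟨w₁.bypass, w₁.bypass_isPath⟩ ⟨w₂.reverse.bypass, w₂.reverse.bypass_isPath⟩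
  cases hcase : w₁.bypass with
  | nil => rfl
  | @cons _ z _ hadj _ =>
    have hd : (⟨(x, z), hadj⟩ : (arcGraph A).Dart) ∈ w₁.bypass.darts := by simp [hcase]
    have hforward := hw₁ _ (w₁.darts_bypass_subset_darts hd)
    have hbackward : _ ∈ w₂.darts.map Dart.symm :=
      List.mem_reverse.mp <|
        Walk.darts_reverse w₂ ▸ w₂.reverse.darts_bypass_subset_darts (hpath ▸ hd)
    obtain ⟨d, hd₂, hsymm⟩ := List.mem_map.mp hbackward
    have hswap : d.toProd = Prod.swap (x, z) := by rw [← Dart.symm_symm d, hsymm]; rfl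
    exact absurd (hswap ▸ hw₂ d hd₂) (hA.2 _ hforward).2

lemma IsDirTree.not_reflTransGen_of_transGen (hA : IsDirTree A) {x y : U}
    (hxy : Relation.TransGen (stepRel A) x y) : ¬ Relation.ReflTransGen (stepRel A) y x := by
  intro hyx
  obtain ⟨a, hxa, hay⟩ := Relation.TransGen.head'_iff.mp hxy
  have hax : a = x := hA.reflTransGen_antisymm (hay.trans hyx) (.single hxa)
  exact (hA.2 _ hxa).1 hax.symm

lemma reflTransGen_of_walk_without_forward_dart {R : U → U → Prop}
    (hB : ∀ e ∈ B, Relation.ReflTransGen R e.1 e.2) {a b : U} (q : (arcGraph B).Walk a b)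
    (hq : ∀ d ∈ q.darts, d.toProd ∉ B) : Relation.ReflTransGen R b a := by
  induction q with
  | nil => exact .refl
  | cons hadj q ih =>
    rw [Walk.darts_cons, List.forall_mem_cons] at hq
    have hback := hadj.2.resolve_left hq.1
    exact (ih hq.2).trans (hB _ hback)

end

theorem path_contains_forward_arc_general [DecidableEq U]
    (A₀ Arcs : Finset (U × U))
    (htree : IsDirTree A₀)
    (hspan : ∀ a ∈ Arcs, Relation.ReflTransGen (stepRel A₀) a.1 a.2)
    (B : Finset (U × U)) (hBsub : B ⊆ Arcs)
    (v v' : U)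
    (hdir : Relation.TransGen (stepRel A₀) v v') :
    ∀ p : (arcGraph B).Walk v v', p.IsPath →
      ∃ d ∈ p.darts, SimpleGraph.Dart.toProd d ∈ B := by
  intro p _
  by_contra! hbackward
  exact htree.not_reflTransGen_of_transGen hdir <|
    reflTransGen_of_walk_without_forward_dart (fun e he => hspan e (hBsub he)) p hbackward

/-- Let `T = (U, A₀)` be an arborescence rooted at `r`, let every arc of `D` span a
`T`-directed path, and let `B ⊆ Arcs` be a cardinal basis whose arc set forms a
directed tree `T_B`.  If `(v,v')` is an arc of `D` (spanning a nonempty directed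
`T`-path), then the unique `T_B`-path from `v` to `v'` contains at least one forward
arc (a dart traversed in the orientation of an arc of `B`). -/
theorem path_contains_forward_arc [Fintype U] [DecidableEq U]
    (A₀ Arcs : Finset (U × U)) (r : U)
    (htree : IsDirTree A₀)
    (hroot : ∀ v : U, Relation.ReflTransGen (stepRel A₀) r v)
    (hspan : ∀ a ∈ Arcs, Relation.ReflTransGen (stepRel A₀) a.1 a.2)
    (B : Finset (U × U)) (hBsub : B ⊆ Arcs) (hBtree : IsDirTree B)
    (v v' : U) (hvt : (v, v') ∈ Arcs)
    (hdir : Relation.TransGen (stepRel A₀) v v') :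
    ∀ p : (arcGraph B).Walk v v', p.IsPath →
      ∃ d ∈ p.darts, SimpleGraph.Dart.toProd d ∈ B :=
  path_contains_forward_arc_general A₀ Arcs htree hspan B hBsub v v' hdir
end

section
/- Let (A,b,C) be a Scarf triple and define (A',b',C') by adding a 0-th row and column: A' is block diagonal with a 1 in the new corner, b' prepends 1 to b, and C' has 0 in the corner, the new column below filled with a constant M strictly larger than every entry of C, and the new row to the right equal to (m, m-1, …, 2, 1). Then B is a dominating basis for (A,b,C) if and only if B ∪ {0} is a dominating basis for (A',b',C'). -/
/-- `B` is a dominating basis for `(A,b,C)`: a feasible cardinal basis (`n` linearly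
independent columns supporting a nonnegative solution of `Ax = b`) that is also an
ordinal basis of `C`. -/
def IsDominatingBasis {n m : ℕ} (A C : Matrix (Fin n) (Fin m) ℝ) (b : Fin n → ℝ)
    (B : Finset (Fin m)) : Prop :=
  B.card = n ∧
  LinearIndependent ℝ (fun j : B => fun i => A i (j : Fin m)) ∧
  (∃ x : Fin m → ℝ, (∀ j, 0 ≤ x j) ∧ A.mulVec x = b ∧ ∀ j, x j ≠ 0 → j ∈ B) ∧
  (∀ j : Fin m, ∃ i : Fin n, ∀ l ∈ B, C i j ≤ C i l)

/-- Adding an artificial `0`-th row and column.  `A'` is block diagonal with a `1` in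
the new corner, `b'` prepends `1` to `b`, and `C'` has `0` in the corner, the new
column filled with a constant `Mc` larger than every entry of `C`, and the new row
equal to `(m, m-1, …, 1)`.  Then `B` is a dominating basis for `(A,b,C)` iff
`B ∪ {0}` is a dominating basis for `(A',b',C')`. -/
theorem dominating_basis_zero_extension (n m : ℕ) (hnm : n ≤ m)
    (A C : Matrix (Fin n) (Fin m) ℝ) (b : Fin n → ℝ)
    (hA0 : ∀ i j, 0 ≤ A i j)
    (hstd : ∀ i j : Fin n, A i (Fin.castLE hnm j) = if i = j then 1 else 0)
    (hb : ∀ i, 0 < b i)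
    (hbdd : ∃ R : ℝ, ∀ x : Fin m → ℝ,
      (∀ j, 0 ≤ x j) → A.mulVec x = b → ∀ j, x j ≤ R)
    (hC : IsOrdinalMatrix hnm C)
    (Mc : ℝ) (hMc : ∀ i j, C i j < Mc)
    (A' : Matrix (Fin (n+1)) (Fin (m+1)) ℝ)
    (hA' : A' = Matrix.of fun i j =>
      Fin.cases (Fin.cases (1 : ℝ) (fun _ => 0) j)
        (fun i' => Fin.cases (0 : ℝ) (fun j' => A i' j') j) i)
    (C' : Matrix (Fin (n+1)) (Fin (m+1)) ℝ)
    (hC' : C' = Matrix.of fun i j =>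
      Fin.cases (Fin.cases (0 : ℝ) (fun j' => (m : ℝ) - (j' : ℕ)) j)
        (fun i' => Fin.cases Mc (fun j' => C i' j') j) i)
    (b' : Fin (n+1) → ℝ) (hb' : b' = Fin.cases 1 b)
    (B : Finset (Fin m)) :
    IsDominatingBasis A C b B ↔
      IsDominatingBasis A' C' b'
        (insert 0 (B.map ⟨Fin.succ, Fin.succ_injective m⟩)) := by

  have hA'00 : A' 0 0 = 1 := by rw [hA']; rfl
  have hA'0s : ∀ j, A' 0 (Fin.succ j) = 0 := by intro j; rw [hA']; simp
  have hA's0 : ∀ i, A' (Fin.succ i) 0 = 0 := by intro i; rw [hA']; simp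
  have hA'ss : ∀ i j, A' (Fin.succ i) (Fin.succ j) = A i j := by
    intro i j; rw [hA']; simp
  have hC'00 : C' 0 0 = 0 := by rw [hC']; rfl
  have hC'0s : ∀ j, C' 0 (Fin.succ j) = (m : ℝ) - (j : ℕ) := by
    intro j; rw [hC']; simp
  have hC's0 : ∀ i, C' (Fin.succ i) 0 = Mc := by intro i; rw [hC']; simp
  have hC'ss : ∀ i j, C' (Fin.succ i) (Fin.succ j) = C i j := by
    intro i j; rw [hC']; simp
  have hb'0 : b' 0 = 1 := by rw [hb']; rfl
  have hb's : ∀ i, b' (Fin.succ i) = b i := by intro i; rw [hb']; simp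
  set em : Fin m ↪ Fin (m+1) := ⟨Fin.succ, Fin.succ_injective m⟩ with hem
  set B' : Finset (Fin (m+1)) := insert 0 (B.map em) with hB'
  have h0T : (0 : Fin (m+1)) ∉ B.map em := by
    simp [hem, Fin.succ_ne_zero]
  have hmem : ∀ j : Fin (m+1), j ∈ B' ↔ j = 0 ∨ ∃ j' ∈ B, Fin.succ j' = j := by
    intro j; simp [hB', hem, Finset.mem_insert, Finset.mem_map]
  have hmemsucc : ∀ j : Fin m, Fin.succ j ∈ B' ↔ j ∈ B := by
    intro j
    rw [hmem]
    constructor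
    · rintro (h | ⟨j', hj', hj'eq⟩)
      · exact absurd h (Fin.succ_ne_zero j)
      · rwa [← Fin.succ_injective m hj'eq]
    · intro h; exact Or.inr ⟨j, h, rfl⟩
  have h0B' : (0 : Fin (m+1)) ∈ B' := Finset.mem_insert_self _ _
  constructor
  · rintro ⟨hcard, hli, ⟨x, hx0, hxA, hxB⟩, hord⟩
    refine ⟨?_, ?_, ?_, ?_⟩
    · rw [hB', Finset.card_insert_of_notMem h0T, Finset.card_map, hcard]
    · -- linear independence
      rw [Fintype.linearIndependent_iff] at hli ⊢
      intro g hg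
      set G : Fin (m+1) → ℝ := fun j => if h : j ∈ B' then g ⟨j, h⟩ else 0 with hG
      have hGg : ∀ j : B', G j.1 = g j := by
        intro j; rw [hG]; simp [j.2]
      have hsum : ∑ j ∈ B', G j • (fun i : Fin (n+1) => A' i j) = 0 := by
        rw [Finset.sum_subtype B' (fun _ => Iff.rfl)]
        rw [← hg]
        exact Finset.sum_congr rfl fun j _ => by rw [hGg]
      rw [hB', Finset.sum_insert h0T, Finset.sum_map] at hsum
      have h0 : G 0 = 0 := by
        have h := congrFun hsum 0
        simp only [Finset.sum_apply, Pi.add_apply, Pi.smul_apply, Pi.zero_apply,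
          hA'00, hA'0s, hem, Function.Embedding.coeFn_mk, smul_eq_mul, mul_one,
          mul_zero, Finset.sum_const_zero, add_zero] at h
        exact h
      have hmain : ∀ j : B, G (Fin.succ j.1) = 0 := by
        apply hli (fun j : B => G (Fin.succ j.1))
        funext i
        have h := congrFun hsum (Fin.succ i)
        simp only [Finset.sum_apply, Pi.add_apply, Pi.smul_apply, Pi.zero_apply,
          hA's0, hA'ss, hem, Function.Embedding.coeFn_mk, smul_eq_mul, mul_zero,
          zero_add] at h
        simp only [Finset.sum_apply, Pi.zero_apply, Pi.smul_apply, smul_eq_mul]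
        rw [Finset.sum_subtype B (fun _ => Iff.rfl) (fun j => G (Fin.succ j) * A i j)] at h
        exact h
      intro j
      rw [← hGg j]
      rcases (hmem j.1).1 j.2 with h | ⟨j', hj', hj'eq⟩
      · rw [h]; exact h0
      · rw [← hj'eq]; exact hmain ⟨j', hj'⟩
    · -- feasible solution
      refine ⟨Fin.cases 1 x, ?_, ?_, ?_⟩
      · intro j
        refine Fin.cases ?_ (fun j' => ?_) j
        · simp
        · simp [hx0 j']
      · funext i
        refine Fin.cases ?_ (fun i' => ?_) i
        · simp only [Matrix.mulVec, dotProduct]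
          simp [Fin.sum_univ_succ, hA'00, hA'0s, hb'0]
        · have h := congrFun hxA i'
          simp only [Matrix.mulVec, dotProduct] at h ⊢
          simp [Fin.sum_univ_succ, hA's0, hA'ss, hb's, h]
      · intro j
        refine Fin.cases ?_ (fun j' => ?_) j
        · intro _; exact h0B'
        · intro hj'
          simp only [Fin.cases_succ] at hj'
          exact (hmemsucc j').2 (hxB j' hj')
    · -- ordinal condition
      intro j
      refine Fin.cases ?_ (fun j' => ?_) j
      · refine ⟨0, fun l hl => ?_⟩
        refine Fin.cases ?_ (fun l' _ => ?_) l hl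
        · intro _; rw [hC'00]
        · rw [hC'00, hC'0s]
          have : (l' : ℝ) ≤ m := by exact_mod_cast le_of_lt l'.isLt
          linarith
      · obtain ⟨i, hi⟩ := hord j'
        refine ⟨Fin.succ i, fun l hl => ?_⟩
        rcases (hmem l).1 hl with h | ⟨l', hl', hl'eq⟩
        · subst h
          rw [hC's0, hC'ss]
          exact le_of_lt (hMc i j')
        · subst hl'eq
          rw [hC'ss, hC'ss]
          exact hi l' hl'
  · rintro ⟨hcard, hli, ⟨x, hx0, hxA, hxB⟩, hord⟩
    refine ⟨?_, ?_, ?_, ?_⟩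
    · rw [hB', Finset.card_insert_of_notMem h0T, Finset.card_map] at hcard
      omega
    · rw [Fintype.linearIndependent_iff] at hli ⊢
      intro g hg
      set G : Fin (m+1) → ℝ := fun j =>
        Fin.cases 0 (fun j' => if h : j' ∈ B then g ⟨j', h⟩ else 0) j with hG
      have hGsucc : ∀ j : B, G (Fin.succ j.1) = g j := by
        intro j; rw [hG]; simp [j.2]
      have hmain : ∀ j : B', G j.1 = 0 := by
        apply hli (fun j : B' => G j.1)
        rw [← Finset.sum_subtype B' (fun _ => Iff.rfl)
          (fun j => G j • (fun i : Fin (n+1) => A' i j))]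
        rw [hB', Finset.sum_insert h0T, Finset.sum_map]
        have hG0 : G 0 = 0 := by rw [hG]; rfl
        rw [hG0, zero_smul, zero_add]
        funext i
        refine Fin.cases ?_ (fun i' => ?_) i
        · simp [hem, hA'0s]
        · simp only [Finset.sum_apply, Pi.zero_apply, Pi.smul_apply, smul_eq_mul,
            hA'ss, hem, Function.Embedding.coeFn_mk]
          have h := congrFun hg i'
          simp only [Finset.sum_apply, Pi.zero_apply, Pi.smul_apply, smul_eq_mul] at h
          rw [Finset.sum_subtype B (fun _ => Iff.rfl)
            (fun j => G (Fin.succ j) * A i' j)]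
          rw [← h]
          exact Finset.sum_congr rfl fun j _ => by rw [hGsucc]
      intro j
      rw [← hGsucc j]
      exact hmain ⟨Fin.succ j.1, (hmemsucc j.1).2 j.2⟩
    · refine ⟨fun j => x (Fin.succ j), fun j => hx0 _, ?_, ?_⟩
      · funext i
        have h := congrFun hxA (Fin.succ i)
        simp only [Matrix.mulVec, dotProduct] at h ⊢
        simp only [Fin.sum_univ_succ, hA's0, hA'ss, hb's, zero_mul, zero_add] at h
        exact h
      · intro j hj
        exact (hmemsucc j).1 (hxB (Fin.succ j) hj)
    · intro j
      obtain ⟨i, hi⟩ := hord (Fin.succ j)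
      refine Fin.cases ?_ (fun i' hi => ?_) i hi
      · intro hi
        exfalso
        have h := hi 0 h0B'
        rw [hC'0s, hC'00] at h
        have : (j : ℝ) < m := by exact_mod_cast j.isLt
        linarith
      · refine ⟨i', fun l hl => ?_⟩
        have h := hi (Fin.succ l) ((hmemsucc l).2 hl)
        rwa [hC'ss, hC'ss] at h
end

section
/- In the modified Scarf instance (A',b',C') with artificial 0-th row and column, every feasible cardinal basis obtained by a cardinal pivot contains the 0-th column. Consequently, for every Scarf pair (B,O) with 0 = B \ O, the cardinal pivot (B,O) → (B',O) satisfies B' ≠ O; hence Scarf's algorithm can only terminate immediately after an ordinal pivot. -/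
/-! Columns `B'` of `A'` that are `n + 1` independent vectors of `ℝ^(n+1)` span it, so one of them
is nonzero in row `0`; since row `0` of `A'` is `e₀`, that column is column `0`. -/

open Submodule

theorem exists_apply_ne_zero_of_span_eq_top {R ι κ : Type*} [Semiring R] [Nontrivial R]
    {v : ι → κ → R} (hv : span R (Set.range v) = ⊤) (k : κ) : ∃ i, v i k ≠ 0 := by
  by_contra! hvanish
  have hle : span R (Set.range v) ≤ LinearMap.ker (LinearMap.proj k) :=
    span_le.2 (by rintro _ ⟨i, rfl⟩; exact hvanish i)
  rw [hv] at hle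
  simpa using hle (mem_top (x := (1 : κ → R)))

theorem LinearIndependent.exists_apply_ne_zero {K ι κ : Type*} [Field K] [Fintype ι] [Fintype κ]
    {v : ι → κ → K} (hv : LinearIndependent K v) (hcard : Fintype.card ι = Fintype.card κ)
    (k : κ) : ∃ i, v i k ≠ 0 :=
  exists_apply_ne_zero_of_span_eq_top
    (hv.span_eq_top_of_card_eq_finrank' (by rwa [Module.finrank_fintype_fun_eq_card])) k

/-- In the modified Scarf instance with an artificial `0`-th row and column (the `0`-th
row of `A'` is the unit vector `e₀`), every cardinal basis contains the `0`-th column;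
consequently, for every Scarf pair `(B,O)` with `0 = B \ O`, the cardinal basis `B'`
produced by a cardinal pivot differs from `O`, so the algorithm can only terminate
immediately after an ordinal pivot. -/
theorem cardinal_basis_contains_zero (n m : ℕ)
    (A' : Matrix (Fin (n+1)) (Fin (m+1)) ℝ)
    (hrow0 : ∀ j : Fin (m+1), A' 0 j = if j = 0 then 1 else 0) :
    ∀ B' : Finset (Fin (m+1)), B'.card = n + 1 →
      LinearIndependent ℝ (fun j : B' => fun i => A' i (j : Fin (m+1))) →
      (0 : Fin (m+1)) ∈ B' ∧
      ∀ O : Finset (Fin (m+1)), (0 : Fin (m+1)) ∉ O → B' ≠ O := by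
  intro B' hcard hli
  obtain ⟨j, hj⟩ := hli.exists_apply_ne_zero (by simp [hcard]) 0
  have hj0 : (j : Fin (m+1)) = 0 := by
    by_contra hne
    simp [hrow0, hne] at hj
  have h0 : (0 : Fin (m+1)) ∈ B' := hj0 ▸ j.2
  exact ⟨h0, fun O hO hBO => hO (hBO ▸ h0)⟩
end

section
/- Let (H,≻) be a hypergraphic preference system with block-partitioned matrices A, C augmented by an artificial 0-th row/column, and let (B,O) be a Scarf pair with separator i (i.e., the 0-disliked column of O lies in block S_i). Then the column corresponding to the singleton hyperedge {i} belongs to O and is the i-disliked column of O. -/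
/-- The block-partitioned matrices of a hypergraphic preference system, augmented with
an artificial `0`-th row and column.  Rows are the vertices `0,1,…,n` (vertex `0`
artificial), columns are the hyperedges `0,1,…,m`; column `Fin.castLE _ i` is the
singleton hyperedge `{i}`.  `Inc i j` records that vertex `i` belongs to the
hyperedge of column `j`, and `blk j` is the block (the maximum vertex of the
hyperedge) of each non-singleton column `j` (those with `n < j`). -/
structure BlockPartitioned (n m : ℕ) where
  hnm : n ≤ m
  C : Matrix (Fin (n+1)) (Fin (m+1)) ℝ
  Inc : Fin (n+1) → Fin (m+1) → Prop
  blk : Fin (m+1) → Fin (n+1)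
  /-- every row of `C` has pairwise distinct entries -/
  distinct : ∀ i : Fin (n+1), ∀ j k : Fin (m+1), j ≠ k → C i j ≠ C i k
  /-- the `0`-th row is `(0, m, m-1, …, 1)` -/
  row0_zero : C 0 0 = 0
  row0_pos : ∀ j : Fin (m+1), j ≠ 0 → 0 < C 0 j
  row0_dec : ∀ j k : Fin (m+1), j ≠ 0 → j < k → C 0 k < C 0 j
  /-- the singleton column of `i'` is incident exactly to `i'` -/
  inc_sing : ∀ i i' : Fin (n+1), Inc i (Fin.castLE (Nat.succ_le_succ hnm) i') ↔ i = i'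
  /-- singleton entries are `0` and are the row minimum -/
  sing_zero : ∀ i : Fin (n+1), i ≠ 0 → C i (Fin.castLE (Nat.succ_le_succ hnm) i) = 0
  sing_min : ∀ i : Fin (n+1), i ≠ 0 → ∀ j : Fin (m+1),
    j ≠ Fin.castLE (Nat.succ_le_succ hnm) i →
    C i (Fin.castLE (Nat.succ_le_succ hnm) i) < C i j
  /-- incident entries of a row are smaller than non-incident ones -/
  inc_lt_noninc : ∀ i : Fin (n+1), i ≠ 0 → ∀ j k : Fin (m+1),
    Inc i j → ¬ Inc i k → C i j < C i k
  /-- non-incident entries of a row decrease from left to right -/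
  noninc_dec : ∀ i : Fin (n+1), i ≠ 0 → ∀ j k : Fin (m+1),
    ¬ Inc i j → ¬ Inc i k → j < k → C i k < C i j
  /-- a non-singleton column is incident to its block vertex, which is its maximum -/
  blk_mem : ∀ j : Fin (m+1), n < (j : ℕ) → Inc (blk j) j
  blk_max : ∀ j : Fin (m+1), n < (j : ℕ) → ∀ i, Inc i j → i ≤ blk j
  blk_ne0 : ∀ j : Fin (m+1), n < (j : ℕ) → blk j ≠ 0
  /-- blocks appear in increasing order -/
  blk_ord : ∀ j k : Fin (m+1), n < (j : ℕ) → n < (k : ℕ) → j < k → blk j ≤ blk k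
  /-- within a block, entries of the block row decrease (preference order) -/
  inblock_dec : ∀ j k : Fin (m+1), n < (j : ℕ) → n < (k : ℕ) →
    blk j = blk k → j < k → C (blk j) k < C (blk j) j

/-- Column `j` is `i`-disliked w.r.t. `O`: `j ∈ O` attains `min_{l ∈ O} C i l`. -/
def Dislikes {n m : ℕ} (C : Matrix (Fin (n+1)) (Fin (m+1)) ℝ)
    (O : Finset (Fin (m+1))) (i : Fin (n+1)) (j : Fin (m+1)) : Prop :=
  j ∈ O ∧ ∀ l ∈ O, C i j ≤ C i l

/-! Every column of `O` is disliked by some row, and rows have distinct entries, so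
"being disliked by" is an injection from the `n + 1` columns of `O` into the `n + 1` rows,
hence a bijection: no column of `O` is disliked by two rows. If the singleton `{i}` of the
separator `i` were missing from `O`, then `j→` would be both `0`-disliked and `i`-disliked,
because every other column of `O` is either not incident to `i` or lies left of `j→` in the
block `S_i`. -/

section Dislikes

variable {n m : ℕ} {C : Matrix (Fin (n+1)) (Fin (m+1)) ℝ} {O : Finset (Fin (m+1))}

theorem Dislikes.unique {i : Fin (n+1)} (hrow : Function.Injective (C i))
    {j k : Fin (m+1)} (hj : Dislikes C O i j) (hk : Dislikes C O i k) : j = k :=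
  hrow (le_antisymm (hj.2 k hk.1) (hk.2 j hj.1))

theorem Dislikes.row_unique (hrow : ∀ i, Function.Injective (C i)) (hOcard : O.card = n + 1)
    (hdom : ∀ j ∈ O, ∃ i, ∀ l ∈ O, C i j ≤ C i l) {i i' : Fin (n+1)} {j : Fin (m+1)}
    (hi : Dislikes C O i j) (hi' : Dislikes C O i' j) : i = i' := by
  choose! ψ hψ using hdom
  have hψdis : ∀ k ∈ O, Dislikes C O (ψ k) k := fun k hk => ⟨hk, hψ k hk⟩
  have hinj : Set.InjOn ψ O := fun k hk k' hk' h =>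
    (hψdis k hk).unique (hrow _) (h ▸ hψdis k' hk')
  have hsurj : O.image ψ = Finset.univ := Finset.eq_univ_of_card _ <| by
    rw [Finset.card_image_of_injOn hinj, hOcard, Fintype.card_fin]
  obtain ⟨k, hk, rfl⟩ := Finset.mem_image.mp (hsurj ▸ Finset.mem_univ i)
  obtain ⟨k', hk', rfl⟩ := Finset.mem_image.mp (hsurj ▸ Finset.mem_univ i')
  rw [(hψdis k hk).unique (hrow _) hi, (hψdis k' hk').unique (hrow _) hi']

end Dislikes

namespace BlockPartitioned

variable {n m : ℕ} (BP : BlockPartitioned n m)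

def singleton (i : Fin (n+1)) : Fin (m+1) := Fin.castLE (Nat.succ_le_succ BP.hnm) i

theorem row_injective (i : Fin (n+1)) : Function.Injective (BP.C i) := fun j k h =>
  by_contra fun hne => BP.distinct i j k hne h

theorem eq_singleton_of_inc {i : Fin (n+1)} {l : Fin (m+1)} (hl : (l : ℕ) ≤ n)
    (hinc : BP.Inc i l) : l = BP.singleton i := by
  have hcast : l = BP.singleton ⟨l, Nat.lt_succ_of_le hl⟩ := rfl
  rw [hcast, (BP.inc_sing i _).mp (hcast ▸ hinc)]

theorem dislikes_singleton {O : Finset (Fin (m+1))} {i : Fin (n+1)} (hi : i ≠ 0)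
    (hmem : BP.singleton i ∈ O) : Dislikes BP.C O i (BP.singleton i) := by
  refine ⟨hmem, fun l _ => ?_⟩
  rcases eq_or_ne l (BP.singleton i) with rfl | hne
  · exact le_rfl
  · exact (BP.sing_min i hi l hne).le

theorem le_of_dislikes_zero {O : Finset (Fin (m+1))} {j : Fin (m+1)} (hj0 : j ≠ 0)
    (hj : Dislikes BP.C O 0 j) : ∀ l ∈ O, l ≤ j := fun l hl =>
  not_lt.mp fun hlt => (BP.row0_dec j l hj0 hlt).not_ge (hj.2 l hl)

theorem dislikes_blk_of_singleton_notMem {O : Finset (Fin (m+1))} {j : Fin (m+1)}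
    (hj : Dislikes BP.C O 0 j) (hjn : n < (j : ℕ))
    (hsing : BP.singleton (BP.blk j) ∉ O) : Dislikes BP.C O (BP.blk j) j := by
  have hj0 : j ≠ 0 := fun h => by simp [h] at hjn
  refine ⟨hj.1, fun l hl => ?_⟩
  by_cases hinc : BP.Inc (BP.blk j) l
  · have hln : n < (l : ℕ) := not_le.mp fun hle =>
      hsing (BP.eq_singleton_of_inc hle hinc ▸ hl)
    rcases (BP.le_of_dislikes_zero hj0 hj l hl).lt_or_eq with hlt | rfl
    · have hblk : BP.blk l = BP.blk j :=
        le_antisymm (BP.blk_ord l j hln hjn hlt) (BP.blk_max l hln _ hinc)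
      exact (hblk ▸ BP.inblock_dec l j hln hjn hblk hlt).le
    · exact le_rfl
  · exact (BP.inc_lt_noninc _ (BP.blk_ne0 j hjn) j l (BP.blk_mem j hjn) hinc).le

end BlockPartitioned

theorem separator_singleton_disliked_general (n m : ℕ) (BP : BlockPartitioned n m)
    (O : Finset (Fin (m+1)))
    (hOcard : O.card = n + 1)
    (hdom : ∀ j : Fin (m+1), ∃ i, ∀ l ∈ O, BP.C i j ≤ BP.C i l)
    (jar : Fin (m+1)) (hjar : Dislikes BP.C O 0 jar) (hjarblk : n < (jar : ℕ)) :
    Fin.castLE (Nat.succ_le_succ BP.hnm) (BP.blk jar) ∈ O ∧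
    Dislikes BP.C O (BP.blk jar)
      (Fin.castLE (Nat.succ_le_succ BP.hnm) (BP.blk jar)) := by
  have hsing : BP.singleton (BP.blk jar) ∈ O := by
    by_contra hnot
    exact BP.blk_ne0 jar hjarblk <|
      (BP.dislikes_blk_of_singleton_notMem hjar hjarblk hnot).row_unique BP.row_injective hOcard
        (fun j _ => hdom j) hjar
  exact ⟨hsing, BP.dislikes_singleton (BP.blk_ne0 jar hjarblk) hsing⟩

/-- Separator lemma: if `(B,O)` is a Scarf pair (`B \ O = {0}`) whose separator is
`i = blk j→`, where `j→` is the `0`-disliked column of `O` (a non-singleton column),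
then the singleton column of `i` belongs to `O` and is its `i`-disliked column. -/
theorem separator_singleton_disliked (n m : ℕ) (BP : BlockPartitioned n m)
    (B O : Finset (Fin (m+1)))
    (hBcard : B.card = n + 1) (hOcard : O.card = n + 1)
    (hBO : B \ O = {0})
    (hdom : ∀ j : Fin (m+1), ∃ i, ∀ l ∈ O, BP.C i j ≤ BP.C i l)
    (jar : Fin (m+1)) (hjar : Dislikes BP.C O 0 jar) (hjarblk : n < (jar : ℕ)) :
    Fin.castLE (Nat.succ_le_succ BP.hnm) (BP.blk jar) ∈ O ∧
    Dislikes BP.C O (BP.blk jar)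
      (Fin.castLE (Nat.succ_le_succ BP.hnm) (BP.blk jar)) :=
  separator_singleton_disliked_general n m BP O hOcard hdom jar hjar hjarblk
end

section
/- During an ordinal pivot from ordinal basis O to O' = O ∪ {j*} \ {j_ℓ} with leaving column j_ℓ (disliked by row i_ℓ), reference column j_r (disliked by row i_r), and entering column j*, the utility vector changes exactly as follows: u^{O'}_{i_ℓ} = c_{i_ℓ, j_r} > c_{i_ℓ, j_ℓ} = u^O_{i_ℓ}; u^{O'}_{i_r} = c_{i_r, j*} < c_{i_r, j_r} = u^O_{i_r}; and u^{O'}_i = u^O_i for every other row i. -/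
namespace Finset

variable {α β : Type*} [LinearOrder α] [DecidableEq β]

lemma inf'_erase_eq_of_inf'_ne {s : Finset β} (hs : s.Nonempty) {a : β}
    (hse : (s.erase a).Nonempty) {f : β → α} (ha : s.inf' hs f ≠ f a) :
    (s.erase a).inf' hse f = s.inf' hs f := by
  obtain ⟨b, hb, hfb⟩ := exists_mem_eq_inf' hs f
  have hba : b ≠ a := by rintro rfl; exact ha hfb
  exact le_antisymm (hfb ▸ inf'_le f (mem_erase.2 ⟨hba, hb⟩))
    (inf'_mono f (erase_subset a s) hse)

end Finset

lemma IsOrdinalMatrix.row_injective {n m : ℕ} {hnm : n ≤ m} {C : Matrix (Fin n) (Fin m) ℝ}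
    (hC : IsOrdinalMatrix hnm C) (i : Fin n) : Function.Injective (C i) :=
  fun _ _ h => by_contra fun hne => hC.1 i _ _ hne h

section OrdinalBasis

variable {ι κ α : Type*} [LinearOrder α] {C : ι → κ → α} {O : Finset κ}
  (hO : O.Nonempty)

/-- Choosing for each column `j ∈ O` a row `g j` dominated by it gives an injection `O → ι`,
which the cardinality assumption makes a bijection. -/
lemma row_eq_of_inf'_eq_apply [Fintype ι] (hC : ∀ i, Function.Injective (C i))
    (hcard : O.card = Fintype.card ι) (hdom : ∀ j ∈ O, ∃ i, C i j ≤ O.inf' hO (C i))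
    {i i' : ι} {j : κ} (hi : O.inf' hO (C i) = C i j) (hi' : O.inf' hO (C i') = C i' j) :
    i = i' := by
  classical
  have : Nonempty ι := hO.elim fun j hj => (hdom j hj).elim fun i _ => ⟨i⟩
  choose! g hg using hdom
  have hgO : ∀ j ∈ O, O.inf' hO (C (g j)) = C (g j) j :=
    fun j hj => le_antisymm (Finset.inf'_le _ hj) (hg j hj)
  have hg_inj : Set.InjOn g O := fun j hj j' hj' h =>
    hC (g j') ((h ▸ hgO j hj).symm.trans (hgO j' hj'))
  have hg_surj : O.image g = Finset.univ :=
    Finset.eq_univ_of_card _ ((Finset.card_image_of_injOn hg_inj).trans hcard)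
  have hcol : ∀ i₀, O.inf' hO (C i₀) = C i₀ j → g j = i₀ := fun i₀ h₀ => by
    obtain ⟨j₀, hj₀, rfl⟩ := Finset.mem_image.1 (hg_surj ▸ Finset.mem_univ i₀)
    rw [hC (g j₀) ((hgO j₀ hj₀).symm.trans h₀)]
  exact (hcol i hi).symm.trans (hcol i' hi')

lemma apply_le_inf'_of_forall_ne_inf'_lt {S : Finset κ} (hSO : S ⊆ O) (hS : S.Nonempty) {k : κ}
    (hdom : ∃ i, C i k ≤ O.inf' hO (C i)) {i₀ : ι}
    (hK : ∀ i ≠ i₀, S.inf' hS (C i) < C i k) :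
    C i₀ k ≤ O.inf' hO (C i₀) := by
  obtain ⟨i, hi⟩ := hdom
  obtain rfl : i = i₀ := by
    by_contra hne
    exact (hi.trans (Finset.inf'_mono _ hSO hS)).not_gt (hK i hne)
  exact hi

end OrdinalBasis

theorem ordinal_pivot_utility_change_general {n m : ℕ} (hnm : n ≤ m)
    (C : Matrix (Fin n) (Fin m) ℝ) (hC : IsOrdinalMatrix hnm C)
    (O : Finset (Fin m)) (hOne : O.Nonempty) (hOcard : O.card = n)
    (hOdom : ∀ j : Fin m, ∃ i : Fin n, C i j ≤ O.inf' hOne (fun l => C i l))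
    (jl : Fin m)
    (il : Fin n) (hil : O.inf' hOne (fun l => C il l) = C il jl)
    (hOe : (O.erase jl).Nonempty)
    (jr : Fin m) (hjrO : jr ∈ O.erase jl)
    (hjr : (O.erase jl).inf' hOe (fun l => C il l) = C il jr)
    (ir : Fin n) (hir : O.inf' hOne (fun l => C ir l) = C ir jr)
    (jstar : Fin m)
    (hjsK : ∀ i : Fin n, i ≠ ir → (O.erase jl).inf' hOe (fun l => C i l) < C i jstar) :
    ((insert jstar (O.erase jl)).inf' (Finset.insert_nonempty _ _) (fun l => C il l) = C il jr
      ∧ C il jl < C il jr) ∧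
    ((insert jstar (O.erase jl)).inf' (Finset.insert_nonempty _ _) (fun l => C ir l) = C ir jstar
      ∧ C ir jstar < C ir jr) ∧
    (∀ i : Fin n, i ≠ il → i ≠ ir →
      (insert jstar (O.erase jl)).inf' (Finset.insert_nonempty _ _) (fun l => C i l)
        = O.inf' hOne (fun l => C i l)) := by
  have hrow := hC.row_injective
  obtain ⟨hjr_ne, hjrO⟩ := Finset.mem_erase.1 hjrO
  have hilr : il ≠ ir := by
    rintro rfl
    exact hjr_ne (hrow il (hir.symm.trans hil))
  have hcard : O.card = Fintype.card (Fin n) := hOcard.trans (Fintype.card_fin n).symm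
  have hstay : ∀ i ≠ il, (O.erase jl).inf' hOe (C i) = O.inf' hOne (C i) := fun i hi =>
    Finset.inf'_erase_eq_of_inf'_ne hOne hOe fun h =>
      hi (row_eq_of_inf'_eq_apply hOne hrow hcard (fun j _ => hOdom j) h hil)
  have hil_lt : C il jr < C il jstar := hjr ▸ hjsK il hilr
  have hir_le : C ir jstar ≤ C ir jr := hir ▸
    apply_le_inf'_of_forall_ne_inf'_lt hOne (O.erase_subset jl) hOe (hOdom jstar) hjsK
  have hjs_ne : jstar ≠ jr := fun h => hil_lt.ne (congrArg (C il) h.symm)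
  simp only [Finset.inf'_insert hOe]
  refine ⟨⟨?_, ?_⟩, ⟨?_, ?_⟩, fun i hi hi' => ?_⟩
  · rw [hjr, inf_eq_right.2 hil_lt.le]
  · exact (hil ▸ Finset.inf'_le _ hjrO).lt_of_ne fun h => hjr_ne (hrow il h).symm
  · rw [hstay ir hilr.symm, hir, inf_eq_left.2 hir_le]
  · exact hir_le.lt_of_ne fun h => hjs_ne (hrow ir h)
  · rw [inf_eq_right.2 (hjsK i hi').le, hstay i hi]

/-- Utility change during an ordinal pivot.  `O` is an ordinal basis, `j_ℓ ∈ O` the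
leaving column disliked by row `i_ℓ`, `j_r` the reference column (minimizer of row `i_ℓ`
over `O \ {j_ℓ}`), `i_r` the row disliking `j_r` w.r.t. `O`, and `j*` the entering
column (the element of `K` maximizing `c_{i_r,·}`).  Then in `O' = O ∪ {j*} \ {j_ℓ}`:
`u^{O'}_{i_ℓ} = c_{i_ℓ,j_r} > c_{i_ℓ,j_ℓ} = u^O_{i_ℓ}`,
`u^{O'}_{i_r} = c_{i_r,j*} < c_{i_r,j_r} = u^O_{i_r}`, and all other utilities stay. -/
theorem ordinal_pivot_utility_change {n m : ℕ} (hnm : n ≤ m)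
    (C : Matrix (Fin n) (Fin m) ℝ) (hC : IsOrdinalMatrix hnm C)
    (O : Finset (Fin m)) (hOne : O.Nonempty) (hOcard : O.card = n)
    (hOdom : ∀ j : Fin m, ∃ i : Fin n, C i j ≤ O.inf' hOne (fun l => C i l))
    (jl : Fin m) (hjl : jl ∈ O)
    (il : Fin n) (hil : O.inf' hOne (fun l => C il l) = C il jl)
    (hOe : (O.erase jl).Nonempty)
    (jr : Fin m) (hjrO : jr ∈ O.erase jl)
    (hjr : (O.erase jl).inf' hOe (fun l => C il l) = C il jr)
    (ir : Fin n) (hir : O.inf' hOne (fun l => C ir l) = C ir jr)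
    (jstar : Fin m) (hjs_notin : jstar ∉ O)
    (hjsK : ∀ i : Fin n, i ≠ ir → (O.erase jl).inf' hOe (fun l => C i l) < C i jstar)
    (hjsmax : ∀ k : Fin m, k ∉ O →
      (∀ i : Fin n, i ≠ ir → (O.erase jl).inf' hOe (fun l => C i l) < C i k) →
      C ir k ≤ C ir jstar)
    (hO'dom : ∀ j : Fin m, ∃ i : Fin n,
      C i j ≤ (insert jstar (O.erase jl)).inf' (Finset.insert_nonempty _ _) (fun l => C i l)) :
    ((insert jstar (O.erase jl)).inf' (Finset.insert_nonempty _ _) (fun l => C il l) = C il jr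
      ∧ C il jl < C il jr) ∧
    ((insert jstar (O.erase jl)).inf' (Finset.insert_nonempty _ _) (fun l => C ir l) = C ir jstar
      ∧ C ir jstar < C ir jr) ∧
    (∀ i : Fin n, i ≠ il → i ≠ ir →
      (insert jstar (O.erase jl)).inf' (Finset.insert_nonempty _ _) (fun l => C i l)
        = O.inf' hOne (fun l => C i l)) :=
  ordinal_pivot_utility_change_general hnm C hC O hOne hOcard hOdom jl il hil hOe jr hjrO hjr ir hir
    jstar hjsK
end

section
/- There exists a hypergraphic preference system I = (H,≻) with H an interval hypergraph on 9 vertices and 9 hyperedges such that the fractional stable matching polytope Q(I) = {x ∈ [0,1]^E : x(δ(i)) ≤ 1 ∀i ∈ V, x(e^⪰) ≥ 1 ∀e ∈ E} has a non-integral extreme point; in particular Q(I) strictly contains the convex hull of characteristic vectors of stable matchings. Concretely, with V = {1,…,9}, edges e₁ = {4,5,6,7}, e₂ = {1,2,3}, e₃ = {6,7,8,9}, f₁ = {1,2,3,4,5}, f₂ = {3,4,5,6}, f₃ = {7,8,9}, g₁ = {1,2}, g₂ = {6,7}, g₃ = {8,9}, and the stated preference lists, the point with x(e₁)=x(e₂)=x(e₃)=0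 and x = 1/2 on f₁,f₂,f₃,g₁,g₂,g₃ is an extreme point of Q(I). -/
open scoped Classical

namespace IntervalCounterexample

/-- The nine hyperedges (indexed `e₁,e₂,e₃,f₁,f₂,f₃,g₁,g₂,g₃`) of the interval
hypergraph on vertices `{1,…,9}` (here `0`-indexed as `Fin 9`). -/
def edges : Fin 9 → Finset (Fin 9) :=
  ![{3, 4, 5, 6}, {0, 1, 2}, {5, 6, 7, 8}, {0, 1, 2, 3, 4}, {2, 3, 4, 5},
    {6, 7, 8}, {0, 1}, {5, 6}, {7, 8}]

/-- The rank (`0` = most preferred) of each hyperedge in the preference list of each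
vertex; `99` for non-incident pairs. -/
def rnk : Fin 9 → Fin 9 → ℕ :=
  ![![99, 0, 99, 2, 99, 99, 1, 99, 99],
    ![99, 1, 99, 0, 99, 99, 2, 99, 99],
    ![99, 2, 99, 1, 0, 99, 99, 99, 99],
    ![0, 99, 99, 2, 1, 99, 99, 99, 99],
    ![1, 99, 99, 0, 2, 99, 99, 99, 99],
    ![0, 99, 2, 99, 1, 99, 99, 3, 99],
    ![1, 99, 2, 99, 99, 0, 99, 3, 99],
    ![99, 99, 0, 99, 99, 2, 99, 99, 1],
    ![99, 99, 1, 99, 99, 0, 99, 99, 2]]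

/-- `e' ⪰_i e` for some vertex `i` of `e`, i.e. `e' ∈ e^⪰`. -/
def Geq (e' e : Fin 9) : Prop :=
  ∃ i ∈ edges e, i ∈ edges e' ∧ rnk i e' ≤ rnk i e

/-- Membership in the fractional stable matching polytope `Q(I)`. -/
def InQ (x : Fin 9 → ℝ) : Prop :=
  (∀ e, 0 ≤ x e ∧ x e ≤ 1) ∧
  (∀ i : Fin 9, ∑ e ∈ Finset.univ.filter (fun e => i ∈ edges e), x e ≤ 1) ∧
  (∀ e : Fin 9, 1 ≤ ∑ e' ∈ Finset.univ.filter (fun e' => Geq e' e), x e')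

/-- `y` is (the characteristic vector of) a stable matching. -/
def IsStable (y : Fin 9 → ℝ) : Prop :=
  (∀ e, y e = 0 ∨ y e = 1) ∧
  ∀ e : Fin 9, ∃ i ∈ edges e,
    ∑ e' ∈ Finset.univ.filter (fun e' => i ∈ edges e' ∧ rnk i e' ≤ rnk i e), y e' = 1

/-- The half-integral point: `0` on `e₁,e₂,e₃` and `1/2` on `f₁,f₂,f₃,g₁,g₂,g₃`. -/
noncomputable def xstar : Fin 9 → ℝ :=
  ![0, 0, 0, 1/2, 1/2, 1/2, 1/2, 1/2, 1/2]

instance : ∀ e' e, Decidable (Geq e' e) := fun e' e =>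
  decidable_of_iff (∃ i ∈ edges e, i ∈ edges e' ∧ rnk i e' ≤ rnk i e) Iff.rfl

lemma fin9_enum (e : Fin 9) :
    e = 0 ∨ e = 1 ∨ e = 2 ∨ e = 3 ∨ e = 4 ∨ e = 5 ∨ e = 6 ∨ e = 7 ∨ e = 8 := by
  revert e; decide

lemma sum9 (f : Fin 9 → ℝ) : ∑ i, f i = f 0 + f 1 + f 2 + f 3 + f 4 + f 5 + f 6 + f 7 + f 8 := by
  rw [Fin.sum_univ_succ, Fin.sum_univ_eight]
  norm_num [show (Fin.succ (0:Fin 8) : Fin 9) = 1 from rfl, show (Fin.succ (1:Fin 8) : Fin 9) = 2 from rfl,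
    show (Fin.succ (2:Fin 8) : Fin 9) = 3 from rfl, show (Fin.succ (3:Fin 8) : Fin 9) = 4 from rfl,
    show (Fin.succ (4:Fin 8) : Fin 9) = 5 from rfl, show (Fin.succ (5:Fin 8) : Fin 9) = 6 from rfl,
    show (Fin.succ (6:Fin 8) : Fin 9) = 7 from rfl, show (Fin.succ (7:Fin 8) : Fin 9) = 8 from rfl]
  ring

lemma xv0 : xstar 0 = (0:ℝ) := rfl
lemma xv1 : xstar 1 = (0:ℝ) := rfl
lemma xv2 : xstar 2 = (0:ℝ) := rfl
lemma xv3 : xstar 3 = (1/2:ℝ) := rfl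
lemma xv4 : xstar 4 = (1/2:ℝ) := rfl
lemma xv5 : xstar 5 = (1/2:ℝ) := rfl
lemma xv6 : xstar 6 = (1/2:ℝ) := rfl
lemma xv7 : xstar 7 = (1/2:ℝ) := rfl
lemma xv8 : xstar 8 = (1/2:ℝ) := rfl

lemma vtx_sums (x : Fin 9 → ℝ) (hx : InQ x) :
    (x 1 + x 3 + x 6 ≤ 1) ∧ (x 1 + x 3 + x 6 ≤ 1) ∧ (x 1 + x 3 + x 4 ≤ 1) ∧ (x 0 + x 3 + x 4 ≤ 1) ∧ (x 0 + x 3 + x 4 ≤ 1) ∧ (x 0 + x 2 + x 4 + x 7 ≤ 1) ∧ (x 0 + x 2 + x 5 + x 7 ≤ 1) ∧ (x 2 + x 5 + x 8 ≤ 1) ∧ (x 2 + x 5 + x 8 ≤ 1) := by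
  have h := hx.2.1
  have h0 := h 0
  rw [Finset.sum_filter, sum9] at h0
  rw [if_neg (by decide : ¬ ((0:Fin 9) ∈ edges 0)),
    if_pos (by decide : (0:Fin 9) ∈ edges 1),
    if_neg (by decide : ¬ ((0:Fin 9) ∈ edges 2)),
    if_pos (by decide : (0:Fin 9) ∈ edges 3),
    if_neg (by decide : ¬ ((0:Fin 9) ∈ edges 4)),
    if_neg (by decide : ¬ ((0:Fin 9) ∈ edges 5)),
    if_pos (by decide : (0:Fin 9) ∈ edges 6),
    if_neg (by decide : ¬ ((0:Fin 9) ∈ edges 7)),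
    if_neg (by decide : ¬ ((0:Fin 9) ∈ edges 8))] at h0
  have h1 := h 1
  rw [Finset.sum_filter, sum9] at h1
  rw [if_neg (by decide : ¬ ((1:Fin 9) ∈ edges 0)),
    if_pos (by decide : (1:Fin 9) ∈ edges 1),
    if_neg (by decide : ¬ ((1:Fin 9) ∈ edges 2)),
    if_pos (by decide : (1:Fin 9) ∈ edges 3),
    if_neg (by decide : ¬ ((1:Fin 9) ∈ edges 4)),
    if_neg (by decide : ¬ ((1:Fin 9) ∈ edges 5)),
    if_pos (by decide : (1:Fin 9) ∈ edges 6),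
    if_neg (by decide : ¬ ((1:Fin 9) ∈ edges 7)),
    if_neg (by decide : ¬ ((1:Fin 9) ∈ edges 8))] at h1
  have h2 := h 2
  rw [Finset.sum_filter, sum9] at h2
  rw [if_neg (by decide : ¬ ((2:Fin 9) ∈ edges 0)),
    if_pos (by decide : (2:Fin 9) ∈ edges 1),
    if_neg (by decide : ¬ ((2:Fin 9) ∈ edges 2)),
    if_pos (by decide : (2:Fin 9) ∈ edges 3),
    if_pos (by decide : (2:Fin 9) ∈ edges 4),
    if_neg (by decide : ¬ ((2:Fin 9) ∈ edges 5)),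
    if_neg (by decide : ¬ ((2:Fin 9) ∈ edges 6)),
    if_neg (by decide : ¬ ((2:Fin 9) ∈ edges 7)),
    if_neg (by decide : ¬ ((2:Fin 9) ∈ edges 8))] at h2
  have h3 := h 3
  rw [Finset.sum_filter, sum9] at h3
  rw [if_pos (by decide : (3:Fin 9) ∈ edges 0),
    if_neg (by decide : ¬ ((3:Fin 9) ∈ edges 1)),
    if_neg (by decide : ¬ ((3:Fin 9) ∈ edges 2)),
    if_pos (by decide : (3:Fin 9) ∈ edges 3),
    if_pos (by decide : (3:Fin 9) ∈ edges 4),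
    if_neg (by decide : ¬ ((3:Fin 9) ∈ edges 5)),
    if_neg (by decide : ¬ ((3:Fin 9) ∈ edges 6)),
    if_neg (by decide : ¬ ((3:Fin 9) ∈ edges 7)),
    if_neg (by decide : ¬ ((3:Fin 9) ∈ edges 8))] at h3
  have h4 := h 4
  rw [Finset.sum_filter, sum9] at h4
  rw [if_pos (by decide : (4:Fin 9) ∈ edges 0),
    if_neg (by decide : ¬ ((4:Fin 9) ∈ edges 1)),
    if_neg (by decide : ¬ ((4:Fin 9) ∈ edges 2)),
    if_pos (by decide : (4:Fin 9) ∈ edges 3),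
    if_pos (by decide : (4:Fin 9) ∈ edges 4),
    if_neg (by decide : ¬ ((4:Fin 9) ∈ edges 5)),
    if_neg (by decide : ¬ ((4:Fin 9) ∈ edges 6)),
    if_neg (by decide : ¬ ((4:Fin 9) ∈ edges 7)),
    if_neg (by decide : ¬ ((4:Fin 9) ∈ edges 8))] at h4
  have h5 := h 5
  rw [Finset.sum_filter, sum9] at h5
  rw [if_pos (by decide : (5:Fin 9) ∈ edges 0),
    if_neg (by decide : ¬ ((5:Fin 9) ∈ edges 1)),
    if_pos (by decide : (5:Fin 9) ∈ edges 2),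
    if_neg (by decide : ¬ ((5:Fin 9) ∈ edges 3)),
    if_pos (by decide : (5:Fin 9) ∈ edges 4),
    if_neg (by decide : ¬ ((5:Fin 9) ∈ edges 5)),
    if_neg (by decide : ¬ ((5:Fin 9) ∈ edges 6)),
    if_pos (by decide : (5:Fin 9) ∈ edges 7),
    if_neg (by decide : ¬ ((5:Fin 9) ∈ edges 8))] at h5
  have h6 := h 6
  rw [Finset.sum_filter, sum9] at h6
  rw [if_pos (by decide : (6:Fin 9) ∈ edges 0),
    if_neg (by decide : ¬ ((6:Fin 9) ∈ edges 1)),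
    if_pos (by decide : (6:Fin 9) ∈ edges 2),
    if_neg (by decide : ¬ ((6:Fin 9) ∈ edges 3)),
    if_neg (by decide : ¬ ((6:Fin 9) ∈ edges 4)),
    if_pos (by decide : (6:Fin 9) ∈ edges 5),
    if_neg (by decide : ¬ ((6:Fin 9) ∈ edges 6)),
    if_pos (by decide : (6:Fin 9) ∈ edges 7),
    if_neg (by decide : ¬ ((6:Fin 9) ∈ edges 8))] at h6
  have h7 := h 7
  rw [Finset.sum_filter, sum9] at h7
  rw [if_neg (by decide : ¬ ((7:Fin 9) ∈ edges 0)),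
    if_neg (by decide : ¬ ((7:Fin 9) ∈ edges 1)),
    if_pos (by decide : (7:Fin 9) ∈ edges 2),
    if_neg (by decide : ¬ ((7:Fin 9) ∈ edges 3)),
    if_neg (by decide : ¬ ((7:Fin 9) ∈ edges 4)),
    if_pos (by decide : (7:Fin 9) ∈ edges 5),
    if_neg (by decide : ¬ ((7:Fin 9) ∈ edges 6)),
    if_neg (by decide : ¬ ((7:Fin 9) ∈ edges 7)),
    if_pos (by decide : (7:Fin 9) ∈ edges 8)] at h7
  have h8 := h 8
  rw [Finset.sum_filter, sum9] at h8
  rw [if_neg (by decide : ¬ ((8:Fin 9) ∈ edges 0)),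
    if_neg (by decide : ¬ ((8:Fin 9) ∈ edges 1)),
    if_pos (by decide : (8:Fin 9) ∈ edges 2),
    if_neg (by decide : ¬ ((8:Fin 9) ∈ edges 3)),
    if_neg (by decide : ¬ ((8:Fin 9) ∈ edges 4)),
    if_pos (by decide : (8:Fin 9) ∈ edges 5),
    if_neg (by decide : ¬ ((8:Fin 9) ∈ edges 6)),
    if_neg (by decide : ¬ ((8:Fin 9) ∈ edges 7)),
    if_pos (by decide : (8:Fin 9) ∈ edges 8)] at h8
  exact ⟨by linarith, by linarith, by linarith, by linarith, by linarith, by linarith, by linarith, by linarith, by linarith⟩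

lemma stab_sums (x : Fin 9 → ℝ) (hx : InQ x) :
    (1 ≤ x 0 + x 3 + x 5) ∧ (1 ≤ x 1 + x 3 + x 4) ∧ (1 ≤ x 0 + x 2 + x 4 + x 5) ∧ (1 ≤ x 0 + x 1 + x 3 + x 4 + x 6) ∧ (1 ≤ x 0 + x 3 + x 4) ∧ (1 ≤ x 2 + x 5 + x 8) ∧ (1 ≤ x 1 + x 3 + x 6) ∧ (1 ≤ x 0 + x 2 + x 4 + x 5 + x 7) ∧ (1 ≤ x 2 + x 5 + x 8) := by
  have h := hx.2.2
  have h0 := h 0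
  rw [Finset.sum_filter, sum9] at h0
  rw [if_pos (by decide : Geq 0 0),
    if_neg (by decide : ¬ (Geq 1 0)),
    if_neg (by decide : ¬ (Geq 2 0)),
    if_pos (by decide : Geq 3 0),
    if_neg (by decide : ¬ (Geq 4 0)),
    if_pos (by decide : Geq 5 0),
    if_neg (by decide : ¬ (Geq 6 0)),
    if_neg (by decide : ¬ (Geq 7 0)),
    if_neg (by decide : ¬ (Geq 8 0))] at h0
  have h1 := h 1
  rw [Finset.sum_filter, sum9] at h1
  rw [if_neg (by decide : ¬ (Geq 0 1)),
    if_pos (by decide : Geq 1 1),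
    if_neg (by decide : ¬ (Geq 2 1)),
    if_pos (by decide : Geq 3 1),
    if_pos (by decide : Geq 4 1),
    if_neg (by decide : ¬ (Geq 5 1)),
    if_neg (by decide : ¬ (Geq 6 1)),
    if_neg (by decide : ¬ (Geq 7 1)),
    if_neg (by decide : ¬ (Geq 8 1))] at h1
  have h2 := h 2
  rw [Finset.sum_filter, sum9] at h2
  rw [if_pos (by decide : Geq 0 2),
    if_neg (by decide : ¬ (Geq 1 2)),
    if_pos (by decide : Geq 2 2),
    if_neg (by decide : ¬ (Geq 3 2)),
    if_pos (by decide : Geq 4 2),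
    if_pos (by decide : Geq 5 2),
    if_neg (by decide : ¬ (Geq 6 2)),
    if_neg (by decide : ¬ (Geq 7 2)),
    if_neg (by decide : ¬ (Geq 8 2))] at h2
  have h3 := h 3
  rw [Finset.sum_filter, sum9] at h3
  rw [if_pos (by decide : Geq 0 3),
    if_pos (by decide : Geq 1 3),
    if_neg (by decide : ¬ (Geq 2 3)),
    if_pos (by decide : Geq 3 3),
    if_pos (by decide : Geq 4 3),
    if_neg (by decide : ¬ (Geq 5 3)),
    if_pos (by decide : Geq 6 3),
    if_neg (by decide : ¬ (Geq 7 3)),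
    if_neg (by decide : ¬ (Geq 8 3))] at h3
  have h4 := h 4
  rw [Finset.sum_filter, sum9] at h4
  rw [if_pos (by decide : Geq 0 4),
    if_neg (by decide : ¬ (Geq 1 4)),
    if_neg (by decide : ¬ (Geq 2 4)),
    if_pos (by decide : Geq 3 4),
    if_pos (by decide : Geq 4 4),
    if_neg (by decide : ¬ (Geq 5 4)),
    if_neg (by decide : ¬ (Geq 6 4)),
    if_neg (by decide : ¬ (Geq 7 4)),
    if_neg (by decide : ¬ (Geq 8 4))] at h4
  have h5 := h 5
  rw [Finset.sum_filter, sum9] at h5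
  rw [if_neg (by decide : ¬ (Geq 0 5)),
    if_neg (by decide : ¬ (Geq 1 5)),
    if_pos (by decide : Geq 2 5),
    if_neg (by decide : ¬ (Geq 3 5)),
    if_neg (by decide : ¬ (Geq 4 5)),
    if_pos (by decide : Geq 5 5),
    if_neg (by decide : ¬ (Geq 6 5)),
    if_neg (by decide : ¬ (Geq 7 5)),
    if_pos (by decide : Geq 8 5)] at h5
  have h6 := h 6
  rw [Finset.sum_filter, sum9] at h6
  rw [if_neg (by decide : ¬ (Geq 0 6)),
    if_pos (by decide : Geq 1 6),
    if_neg (by decide : ¬ (Geq 2 6)),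
    if_pos (by decide : Geq 3 6),
    if_neg (by decide : ¬ (Geq 4 6)),
    if_neg (by decide : ¬ (Geq 5 6)),
    if_pos (by decide : Geq 6 6),
    if_neg (by decide : ¬ (Geq 7 6)),
    if_neg (by decide : ¬ (Geq 8 6))] at h6
  have h7 := h 7
  rw [Finset.sum_filter, sum9] at h7
  rw [if_pos (by decide : Geq 0 7),
    if_neg (by decide : ¬ (Geq 1 7)),
    if_pos (by decide : Geq 2 7),
    if_neg (by decide : ¬ (Geq 3 7)),
    if_pos (by decide : Geq 4 7),
    if_pos (by decide : Geq 5 7),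
    if_neg (by decide : ¬ (Geq 6 7)),
    if_pos (by decide : Geq 7 7),
    if_neg (by decide : ¬ (Geq 8 7))] at h7
  have h8 := h 8
  rw [Finset.sum_filter, sum9] at h8
  rw [if_neg (by decide : ¬ (Geq 0 8)),
    if_neg (by decide : ¬ (Geq 1 8)),
    if_pos (by decide : Geq 2 8),
    if_neg (by decide : ¬ (Geq 3 8)),
    if_neg (by decide : ¬ (Geq 4 8)),
    if_pos (by decide : Geq 5 8),
    if_neg (by decide : ¬ (Geq 6 8)),
    if_neg (by decide : ¬ (Geq 7 8)),
    if_pos (by decide : Geq 8 8)] at h8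
  exact ⟨by linarith, by linarith, by linarith, by linarith, by linarith, by linarith, by linarith, by linarith, by linarith⟩

lemma inQ_xstar : InQ xstar := by
  refine ⟨?_, ?_, ?_⟩
  · intro e
    rcases fin9_enum e with rfl|rfl|rfl|rfl|rfl|rfl|rfl|rfl|rfl <;>
      norm_num [xv0, xv1, xv2, xv3, xv4, xv5, xv6, xv7, xv8]
  · intro i
    rcases fin9_enum i with rfl|rfl|rfl|rfl|rfl|rfl|rfl|rfl|rfl
    · rw [Finset.sum_filter, sum9]
      rw [if_neg (by decide : ¬ ((0:Fin 9) ∈ edges 0)),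
        if_pos (by decide : (0:Fin 9) ∈ edges 1),
        if_neg (by decide : ¬ ((0:Fin 9) ∈ edges 2)),
        if_pos (by decide : (0:Fin 9) ∈ edges 3),
        if_neg (by decide : ¬ ((0:Fin 9) ∈ edges 4)),
        if_neg (by decide : ¬ ((0:Fin 9) ∈ edges 5)),
        if_pos (by decide : (0:Fin 9) ∈ edges 6),
        if_neg (by decide : ¬ ((0:Fin 9) ∈ edges 7)),
        if_neg (by decide : ¬ ((0:Fin 9) ∈ edges 8))]
      norm_num [xv0, xv1, xv2, xv3, xv4, xv5, xv6, xv7, xv8]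
    · rw [Finset.sum_filter, sum9]
      rw [if_neg (by decide : ¬ ((1:Fin 9) ∈ edges 0)),
        if_pos (by decide : (1:Fin 9) ∈ edges 1),
        if_neg (by decide : ¬ ((1:Fin 9) ∈ edges 2)),
        if_pos (by decide : (1:Fin 9) ∈ edges 3),
        if_neg (by decide : ¬ ((1:Fin 9) ∈ edges 4)),
        if_neg (by decide : ¬ ((1:Fin 9) ∈ edges 5)),
        if_pos (by decide : (1:Fin 9) ∈ edges 6),
        if_neg (by decide : ¬ ((1:Fin 9) ∈ edges 7)),
        if_neg (by decide : ¬ ((1:Fin 9) ∈ edges 8))]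
      norm_num [xv0, xv1, xv2, xv3, xv4, xv5, xv6, xv7, xv8]
    · rw [Finset.sum_filter, sum9]
      rw [if_neg (by decide : ¬ ((2:Fin 9) ∈ edges 0)),
        if_pos (by decide : (2:Fin 9) ∈ edges 1),
        if_neg (by decide : ¬ ((2:Fin 9) ∈ edges 2)),
        if_pos (by decide : (2:Fin 9) ∈ edges 3),
        if_pos (by decide : (2:Fin 9) ∈ edges 4),
        if_neg (by decide : ¬ ((2:Fin 9) ∈ edges 5)),
        if_neg (by decide : ¬ ((2:Fin 9) ∈ edges 6)),
        if_neg (by decide : ¬ ((2:Fin 9) ∈ edges 7)),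
        if_neg (by decide : ¬ ((2:Fin 9) ∈ edges 8))]
      norm_num [xv0, xv1, xv2, xv3, xv4, xv5, xv6, xv7, xv8]
    · rw [Finset.sum_filter, sum9]
      rw [if_pos (by decide : (3:Fin 9) ∈ edges 0),
        if_neg (by decide : ¬ ((3:Fin 9) ∈ edges 1)),
        if_neg (by decide : ¬ ((3:Fin 9) ∈ edges 2)),
        if_pos (by decide : (3:Fin 9) ∈ edges 3),
        if_pos (by decide : (3:Fin 9) ∈ edges 4),
        if_neg (by decide : ¬ ((3:Fin 9) ∈ edges 5)),
        if_neg (by decide : ¬ ((3:Fin 9) ∈ edges 6)),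
        if_neg (by decide : ¬ ((3:Fin 9) ∈ edges 7)),
        if_neg (by decide : ¬ ((3:Fin 9) ∈ edges 8))]
      norm_num [xv0, xv1, xv2, xv3, xv4, xv5, xv6, xv7, xv8]
    · rw [Finset.sum_filter, sum9]
      rw [if_pos (by decide : (4:Fin 9) ∈ edges 0),
        if_neg (by decide : ¬ ((4:Fin 9) ∈ edges 1)),
        if_neg (by decide : ¬ ((4:Fin 9) ∈ edges 2)),
        if_pos (by decide : (4:Fin 9) ∈ edges 3),
        if_pos (by decide : (4:Fin 9) ∈ edges 4),
        if_neg (by decide : ¬ ((4:Fin 9) ∈ edges 5)),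
        if_neg (by decide : ¬ ((4:Fin 9) ∈ edges 6)),
        if_neg (by decide : ¬ ((4:Fin 9) ∈ edges 7)),
        if_neg (by decide : ¬ ((4:Fin 9) ∈ edges 8))]
      norm_num [xv0, xv1, xv2, xv3, xv4, xv5, xv6, xv7, xv8]
    · rw [Finset.sum_filter, sum9]
      rw [if_pos (by decide : (5:Fin 9) ∈ edges 0),
        if_neg (by decide : ¬ ((5:Fin 9) ∈ edges 1)),
        if_pos (by decide : (5:Fin 9) ∈ edges 2),
        if_neg (by decide : ¬ ((5:Fin 9) ∈ edges 3)),
        if_pos (by decide : (5:Fin 9) ∈ edges 4),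
        if_neg (by decide : ¬ ((5:Fin 9) ∈ edges 5)),
        if_neg (by decide : ¬ ((5:Fin 9) ∈ edges 6)),
        if_pos (by decide : (5:Fin 9) ∈ edges 7),
        if_neg (by decide : ¬ ((5:Fin 9) ∈ edges 8))]
      norm_num [xv0, xv1, xv2, xv3, xv4, xv5, xv6, xv7, xv8]
    · rw [Finset.sum_filter, sum9]
      rw [if_pos (by decide : (6:Fin 9) ∈ edges 0),
        if_neg (by decide : ¬ ((6:Fin 9) ∈ edges 1)),
        if_pos (by decide : (6:Fin 9) ∈ edges 2),
        if_neg (by decide : ¬ ((6:Fin 9) ∈ edges 3)),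
        if_neg (by decide : ¬ ((6:Fin 9) ∈ edges 4)),
        if_pos (by decide : (6:Fin 9) ∈ edges 5),
        if_neg (by decide : ¬ ((6:Fin 9) ∈ edges 6)),
        if_pos (by decide : (6:Fin 9) ∈ edges 7),
        if_neg (by decide : ¬ ((6:Fin 9) ∈ edges 8))]
      norm_num [xv0, xv1, xv2, xv3, xv4, xv5, xv6, xv7, xv8]
    · rw [Finset.sum_filter, sum9]
      rw [if_neg (by decide : ¬ ((7:Fin 9) ∈ edges 0)),
        if_neg (by decide : ¬ ((7:Fin 9) ∈ edges 1)),
        if_pos (by decide : (7:Fin 9) ∈ edges 2),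
        if_neg (by decide : ¬ ((7:Fin 9) ∈ edges 3)),
        if_neg (by decide : ¬ ((7:Fin 9) ∈ edges 4)),
        if_pos (by decide : (7:Fin 9) ∈ edges 5),
        if_neg (by decide : ¬ ((7:Fin 9) ∈ edges 6)),
        if_neg (by decide : ¬ ((7:Fin 9) ∈ edges 7)),
        if_pos (by decide : (7:Fin 9) ∈ edges 8)]
      norm_num [xv0, xv1, xv2, xv3, xv4, xv5, xv6, xv7, xv8]
    · rw [Finset.sum_filter, sum9]
      rw [if_neg (by decide : ¬ ((8:Fin 9) ∈ edges 0)),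
        if_neg (by decide : ¬ ((8:Fin 9) ∈ edges 1)),
        if_pos (by decide : (8:Fin 9) ∈ edges 2),
        if_neg (by decide : ¬ ((8:Fin 9) ∈ edges 3)),
        if_neg (by decide : ¬ ((8:Fin 9) ∈ edges 4)),
        if_pos (by decide : (8:Fin 9) ∈ edges 5),
        if_neg (by decide : ¬ ((8:Fin 9) ∈ edges 6)),
        if_neg (by decide : ¬ ((8:Fin 9) ∈ edges 7)),
        if_pos (by decide : (8:Fin 9) ∈ edges 8)]
      norm_num [xv0, xv1, xv2, xv3, xv4, xv5, xv6, xv7, xv8]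
  · intro e
    rcases fin9_enum e with rfl|rfl|rfl|rfl|rfl|rfl|rfl|rfl|rfl
    · rw [Finset.sum_filter, sum9]
      rw [if_pos (by decide : Geq 0 0),
        if_neg (by decide : ¬ (Geq 1 0)),
        if_neg (by decide : ¬ (Geq 2 0)),
        if_pos (by decide : Geq 3 0),
        if_neg (by decide : ¬ (Geq 4 0)),
        if_pos (by decide : Geq 5 0),
        if_neg (by decide : ¬ (Geq 6 0)),
        if_neg (by decide : ¬ (Geq 7 0)),
        if_neg (by decide : ¬ (Geq 8 0))]
      norm_num [xv0, xv1, xv2, xv3, xv4, xv5, xv6, xv7, xv8]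
    · rw [Finset.sum_filter, sum9]
      rw [if_neg (by decide : ¬ (Geq 0 1)),
        if_pos (by decide : Geq 1 1),
        if_neg (by decide : ¬ (Geq 2 1)),
        if_pos (by decide : Geq 3 1),
        if_pos (by decide : Geq 4 1),
        if_neg (by decide : ¬ (Geq 5 1)),
        if_neg (by decide : ¬ (Geq 6 1)),
        if_neg (by decide : ¬ (Geq 7 1)),
        if_neg (by decide : ¬ (Geq 8 1))]
      norm_num [xv0, xv1, xv2, xv3, xv4, xv5, xv6, xv7, xv8]
    · rw [Finset.sum_filter, sum9]
      rw [if_pos (by decide : Geq 0 2),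
        if_neg (by decide : ¬ (Geq 1 2)),
        if_pos (by decide : Geq 2 2),
        if_neg (by decide : ¬ (Geq 3 2)),
        if_pos (by decide : Geq 4 2),
        if_pos (by decide : Geq 5 2),
        if_neg (by decide : ¬ (Geq 6 2)),
        if_neg (by decide : ¬ (Geq 7 2)),
        if_neg (by decide : ¬ (Geq 8 2))]
      norm_num [xv0, xv1, xv2, xv3, xv4, xv5, xv6, xv7, xv8]
    · rw [Finset.sum_filter, sum9]
      rw [if_pos (by decide : Geq 0 3),
        if_pos (by decide : Geq 1 3),
        if_neg (by decide : ¬ (Geq 2 3)),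
        if_pos (by decide : Geq 3 3),
        if_pos (by decide : Geq 4 3),
        if_neg (by decide : ¬ (Geq 5 3)),
        if_pos (by decide : Geq 6 3),
        if_neg (by decide : ¬ (Geq 7 3)),
        if_neg (by decide : ¬ (Geq 8 3))]
      norm_num [xv0, xv1, xv2, xv3, xv4, xv5, xv6, xv7, xv8]
    · rw [Finset.sum_filter, sum9]
      rw [if_pos (by decide : Geq 0 4),
        if_neg (by decide : ¬ (Geq 1 4)),
        if_neg (by decide : ¬ (Geq 2 4)),
        if_pos (by decide : Geq 3 4),
        if_pos (by decide : Geq 4 4),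
        if_neg (by decide : ¬ (Geq 5 4)),
        if_neg (by decide : ¬ (Geq 6 4)),
        if_neg (by decide : ¬ (Geq 7 4)),
        if_neg (by decide : ¬ (Geq 8 4))]
      norm_num [xv0, xv1, xv2, xv3, xv4, xv5, xv6, xv7, xv8]
    · rw [Finset.sum_filter, sum9]
      rw [if_neg (by decide : ¬ (Geq 0 5)),
        if_neg (by decide : ¬ (Geq 1 5)),
        if_pos (by decide : Geq 2 5),
        if_neg (by decide : ¬ (Geq 3 5)),
        if_neg (by decide : ¬ (Geq 4 5)),
        if_pos (by decide : Geq 5 5),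
        if_neg (by decide : ¬ (Geq 6 5)),
        if_neg (by decide : ¬ (Geq 7 5)),
        if_pos (by decide : Geq 8 5)]
      norm_num [xv0, xv1, xv2, xv3, xv4, xv5, xv6, xv7, xv8]
    · rw [Finset.sum_filter, sum9]
      rw [if_neg (by decide : ¬ (Geq 0 6)),
        if_pos (by decide : Geq 1 6),
        if_neg (by decide : ¬ (Geq 2 6)),
        if_pos (by decide : Geq 3 6),
        if_neg (by decide : ¬ (Geq 4 6)),
        if_neg (by decide : ¬ (Geq 5 6)),
        if_pos (by decide : Geq 6 6),
        if_neg (by decide : ¬ (Geq 7 6)),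
        if_neg (by decide : ¬ (Geq 8 6))]
      norm_num [xv0, xv1, xv2, xv3, xv4, xv5, xv6, xv7, xv8]
    · rw [Finset.sum_filter, sum9]
      rw [if_pos (by decide : Geq 0 7),
        if_neg (by decide : ¬ (Geq 1 7)),
        if_pos (by decide : Geq 2 7),
        if_neg (by decide : ¬ (Geq 3 7)),
        if_pos (by decide : Geq 4 7),
        if_pos (by decide : Geq 5 7),
        if_neg (by decide : ¬ (Geq 6 7)),
        if_pos (by decide : Geq 7 7),
        if_neg (by decide : ¬ (Geq 8 7))]
      norm_num [xv0, xv1, xv2, xv3, xv4, xv5, xv6, xv7, xv8]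
    · rw [Finset.sum_filter, sum9]
      rw [if_neg (by decide : ¬ (Geq 0 8)),
        if_neg (by decide : ¬ (Geq 1 8)),
        if_pos (by decide : Geq 2 8),
        if_neg (by decide : ¬ (Geq 3 8)),
        if_neg (by decide : ¬ (Geq 4 8)),
        if_pos (by decide : Geq 5 8),
        if_neg (by decide : ¬ (Geq 6 8)),
        if_neg (by decide : ¬ (Geq 7 8)),
        if_pos (by decide : Geq 8 8)]
      norm_num [xv0, xv1, xv2, xv3, xv4, xv5, xv6, xv7, xv8]

lemma stable_key0 (x : Fin 9 → ℝ) (hnn : ∀ e, 0 ≤ x e)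
    (h : ∃ i ∈ edges 0, ∑ e' ∈ Finset.univ.filter (fun e' => i ∈ edges e' ∧ rnk i e' ≤ rnk i 0), x e' = 1) :
    1 ≤ x 0 + x 3 + x 5 := by
  obtain ⟨i, hi, hs⟩ := h
  rcases fin9_enum i with rfl|rfl|rfl|rfl|rfl|rfl|rfl|rfl|rfl
  · exact absurd hi (by decide)
  · exact absurd hi (by decide)
  · exact absurd hi (by decide)
  · rw [Finset.sum_filter, sum9] at hs
    rw [if_pos (by decide : (3:Fin 9) ∈ edges 0 ∧ rnk 3 0 ≤ rnk 3 0),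
      if_neg (by decide : ¬ ((3:Fin 9) ∈ edges 1 ∧ rnk 3 1 ≤ rnk 3 0)),
      if_neg (by decide : ¬ ((3:Fin 9) ∈ edges 2 ∧ rnk 3 2 ≤ rnk 3 0)),
      if_neg (by decide : ¬ ((3:Fin 9) ∈ edges 3 ∧ rnk 3 3 ≤ rnk 3 0)),
      if_neg (by decide : ¬ ((3:Fin 9) ∈ edges 4 ∧ rnk 3 4 ≤ rnk 3 0)),
      if_neg (by decide : ¬ ((3:Fin 9) ∈ edges 5 ∧ rnk 3 5 ≤ rnk 3 0)),
      if_neg (by decide : ¬ ((3:Fin 9) ∈ edges 6 ∧ rnk 3 6 ≤ rnk 3 0)),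
      if_neg (by decide : ¬ ((3:Fin 9) ∈ edges 7 ∧ rnk 3 7 ≤ rnk 3 0)),
      if_neg (by decide : ¬ ((3:Fin 9) ∈ edges 8 ∧ rnk 3 8 ≤ rnk 3 0))] at hs
    linarith [hnn 0, hnn 1, hnn 2, hnn 3, hnn 4, hnn 5, hnn 6, hnn 7, hnn 8]
  · rw [Finset.sum_filter, sum9] at hs
    rw [if_pos (by decide : (4:Fin 9) ∈ edges 0 ∧ rnk 4 0 ≤ rnk 4 0),
      if_neg (by decide : ¬ ((4:Fin 9) ∈ edges 1 ∧ rnk 4 1 ≤ rnk 4 0)),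
      if_neg (by decide : ¬ ((4:Fin 9) ∈ edges 2 ∧ rnk 4 2 ≤ rnk 4 0)),
      if_pos (by decide : (4:Fin 9) ∈ edges 3 ∧ rnk 4 3 ≤ rnk 4 0),
      if_neg (by decide : ¬ ((4:Fin 9) ∈ edges 4 ∧ rnk 4 4 ≤ rnk 4 0)),
      if_neg (by decide : ¬ ((4:Fin 9) ∈ edges 5 ∧ rnk 4 5 ≤ rnk 4 0)),
      if_neg (by decide : ¬ ((4:Fin 9) ∈ edges 6 ∧ rnk 4 6 ≤ rnk 4 0)),
      if_neg (by decide : ¬ ((4:Fin 9) ∈ edges 7 ∧ rnk 4 7 ≤ rnk 4 0)),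
      if_neg (by decide : ¬ ((4:Fin 9) ∈ edges 8 ∧ rnk 4 8 ≤ rnk 4 0))] at hs
    linarith [hnn 0, hnn 1, hnn 2, hnn 3, hnn 4, hnn 5, hnn 6, hnn 7, hnn 8]
  · rw [Finset.sum_filter, sum9] at hs
    rw [if_pos (by decide : (5:Fin 9) ∈ edges 0 ∧ rnk 5 0 ≤ rnk 5 0),
      if_neg (by decide : ¬ ((5:Fin 9) ∈ edges 1 ∧ rnk 5 1 ≤ rnk 5 0)),
      if_neg (by decide : ¬ ((5:Fin 9) ∈ edges 2 ∧ rnk 5 2 ≤ rnk 5 0)),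
      if_neg (by decide : ¬ ((5:Fin 9) ∈ edges 3 ∧ rnk 5 3 ≤ rnk 5 0)),
      if_neg (by decide : ¬ ((5:Fin 9) ∈ edges 4 ∧ rnk 5 4 ≤ rnk 5 0)),
      if_neg (by decide : ¬ ((5:Fin 9) ∈ edges 5 ∧ rnk 5 5 ≤ rnk 5 0)),
      if_neg (by decide : ¬ ((5:Fin 9) ∈ edges 6 ∧ rnk 5 6 ≤ rnk 5 0)),
      if_neg (by decide : ¬ ((5:Fin 9) ∈ edges 7 ∧ rnk 5 7 ≤ rnk 5 0)),
      if_neg (by decide : ¬ ((5:Fin 9) ∈ edges 8 ∧ rnk 5 8 ≤ rnk 5 0))] at hs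
    linarith [hnn 0, hnn 1, hnn 2, hnn 3, hnn 4, hnn 5, hnn 6, hnn 7, hnn 8]
  · rw [Finset.sum_filter, sum9] at hs
    rw [if_pos (by decide : (6:Fin 9) ∈ edges 0 ∧ rnk 6 0 ≤ rnk 6 0),
      if_neg (by decide : ¬ ((6:Fin 9) ∈ edges 1 ∧ rnk 6 1 ≤ rnk 6 0)),
      if_neg (by decide : ¬ ((6:Fin 9) ∈ edges 2 ∧ rnk 6 2 ≤ rnk 6 0)),
      if_neg (by decide : ¬ ((6:Fin 9) ∈ edges 3 ∧ rnk 6 3 ≤ rnk 6 0)),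
      if_neg (by decide : ¬ ((6:Fin 9) ∈ edges 4 ∧ rnk 6 4 ≤ rnk 6 0)),
      if_pos (by decide : (6:Fin 9) ∈ edges 5 ∧ rnk 6 5 ≤ rnk 6 0),
      if_neg (by decide : ¬ ((6:Fin 9) ∈ edges 6 ∧ rnk 6 6 ≤ rnk 6 0)),
      if_neg (by decide : ¬ ((6:Fin 9) ∈ edges 7 ∧ rnk 6 7 ≤ rnk 6 0)),
      if_neg (by decide : ¬ ((6:Fin 9) ∈ edges 8 ∧ rnk 6 8 ≤ rnk 6 0))] at hs
    linarith [hnn 0, hnn 1, hnn 2, hnn 3, hnn 4, hnn 5, hnn 6, hnn 7, hnn 8]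
  · exact absurd hi (by decide)
  · exact absurd hi (by decide)

lemma stable_key1 (x : Fin 9 → ℝ) (hnn : ∀ e, 0 ≤ x e)
    (h : ∃ i ∈ edges 1, ∑ e' ∈ Finset.univ.filter (fun e' => i ∈ edges e' ∧ rnk i e' ≤ rnk i 1), x e' = 1) :
    1 ≤ x 1 + x 3 + x 4 := by
  obtain ⟨i, hi, hs⟩ := h
  rcases fin9_enum i with rfl|rfl|rfl|rfl|rfl|rfl|rfl|rfl|rfl
  · rw [Finset.sum_filter, sum9] at hs
    rw [if_neg (by decide : ¬ ((0:Fin 9) ∈ edges 0 ∧ rnk 0 0 ≤ rnk 0 1)),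
      if_pos (by decide : (0:Fin 9) ∈ edges 1 ∧ rnk 0 1 ≤ rnk 0 1),
      if_neg (by decide : ¬ ((0:Fin 9) ∈ edges 2 ∧ rnk 0 2 ≤ rnk 0 1)),
      if_neg (by decide : ¬ ((0:Fin 9) ∈ edges 3 ∧ rnk 0 3 ≤ rnk 0 1)),
      if_neg (by decide : ¬ ((0:Fin 9) ∈ edges 4 ∧ rnk 0 4 ≤ rnk 0 1)),
      if_neg (by decide : ¬ ((0:Fin 9) ∈ edges 5 ∧ rnk 0 5 ≤ rnk 0 1)),
      if_neg (by decide : ¬ ((0:Fin 9) ∈ edges 6 ∧ rnk 0 6 ≤ rnk 0 1)),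
      if_neg (by decide : ¬ ((0:Fin 9) ∈ edges 7 ∧ rnk 0 7 ≤ rnk 0 1)),
      if_neg (by decide : ¬ ((0:Fin 9) ∈ edges 8 ∧ rnk 0 8 ≤ rnk 0 1))] at hs
    linarith [hnn 0, hnn 1, hnn 2, hnn 3, hnn 4, hnn 5, hnn 6, hnn 7, hnn 8]
  · rw [Finset.sum_filter, sum9] at hs
    rw [if_neg (by decide : ¬ ((1:Fin 9) ∈ edges 0 ∧ rnk 1 0 ≤ rnk 1 1)),
      if_pos (by decide : (1:Fin 9) ∈ edges 1 ∧ rnk 1 1 ≤ rnk 1 1),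
      if_neg (by decide : ¬ ((1:Fin 9) ∈ edges 2 ∧ rnk 1 2 ≤ rnk 1 1)),
      if_pos (by decide : (1:Fin 9) ∈ edges 3 ∧ rnk 1 3 ≤ rnk 1 1),
      if_neg (by decide : ¬ ((1:Fin 9) ∈ edges 4 ∧ rnk 1 4 ≤ rnk 1 1)),
      if_neg (by decide : ¬ ((1:Fin 9) ∈ edges 5 ∧ rnk 1 5 ≤ rnk 1 1)),
      if_neg (by decide : ¬ ((1:Fin 9) ∈ edges 6 ∧ rnk 1 6 ≤ rnk 1 1)),
      if_neg (by decide : ¬ ((1:Fin 9) ∈ edges 7 ∧ rnk 1 7 ≤ rnk 1 1)),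
      if_neg (by decide : ¬ ((1:Fin 9) ∈ edges 8 ∧ rnk 1 8 ≤ rnk 1 1))] at hs
    linarith [hnn 0, hnn 1, hnn 2, hnn 3, hnn 4, hnn 5, hnn 6, hnn 7, hnn 8]
  · rw [Finset.sum_filter, sum9] at hs
    rw [if_neg (by decide : ¬ ((2:Fin 9) ∈ edges 0 ∧ rnk 2 0 ≤ rnk 2 1)),
      if_pos (by decide : (2:Fin 9) ∈ edges 1 ∧ rnk 2 1 ≤ rnk 2 1),
      if_neg (by decide : ¬ ((2:Fin 9) ∈ edges 2 ∧ rnk 2 2 ≤ rnk 2 1)),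
      if_pos (by decide : (2:Fin 9) ∈ edges 3 ∧ rnk 2 3 ≤ rnk 2 1),
      if_pos (by decide : (2:Fin 9) ∈ edges 4 ∧ rnk 2 4 ≤ rnk 2 1),
      if_neg (by decide : ¬ ((2:Fin 9) ∈ edges 5 ∧ rnk 2 5 ≤ rnk 2 1)),
      if_neg (by decide : ¬ ((2:Fin 9) ∈ edges 6 ∧ rnk 2 6 ≤ rnk 2 1)),
      if_neg (by decide : ¬ ((2:Fin 9) ∈ edges 7 ∧ rnk 2 7 ≤ rnk 2 1)),
      if_neg (by decide : ¬ ((2:Fin 9) ∈ edges 8 ∧ rnk 2 8 ≤ rnk 2 1))] at hs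
    linarith [hnn 0, hnn 1, hnn 2, hnn 3, hnn 4, hnn 5, hnn 6, hnn 7, hnn 8]
  · exact absurd hi (by decide)
  · exact absurd hi (by decide)
  · exact absurd hi (by decide)
  · exact absurd hi (by decide)
  · exact absurd hi (by decide)
  · exact absurd hi (by decide)

lemma stable_key2 (x : Fin 9 → ℝ) (hnn : ∀ e, 0 ≤ x e)
    (h : ∃ i ∈ edges 2, ∑ e' ∈ Finset.univ.filter (fun e' => i ∈ edges e' ∧ rnk i e' ≤ rnk i 2), x e' = 1) :
    1 ≤ x 0 + x 2 + x 4 + x 5 := by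
  obtain ⟨i, hi, hs⟩ := h
  rcases fin9_enum i with rfl|rfl|rfl|rfl|rfl|rfl|rfl|rfl|rfl
  · exact absurd hi (by decide)
  · exact absurd hi (by decide)
  · exact absurd hi (by decide)
  · exact absurd hi (by decide)
  · exact absurd hi (by decide)
  · rw [Finset.sum_filter, sum9] at hs
    rw [if_pos (by decide : (5:Fin 9) ∈ edges 0 ∧ rnk 5 0 ≤ rnk 5 2),
      if_neg (by decide : ¬ ((5:Fin 9) ∈ edges 1 ∧ rnk 5 1 ≤ rnk 5 2)),
      if_pos (by decide : (5:Fin 9) ∈ edges 2 ∧ rnk 5 2 ≤ rnk 5 2),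
      if_neg (by decide : ¬ ((5:Fin 9) ∈ edges 3 ∧ rnk 5 3 ≤ rnk 5 2)),
      if_pos (by decide : (5:Fin 9) ∈ edges 4 ∧ rnk 5 4 ≤ rnk 5 2),
      if_neg (by decide : ¬ ((5:Fin 9) ∈ edges 5 ∧ rnk 5 5 ≤ rnk 5 2)),
      if_neg (by decide : ¬ ((5:Fin 9) ∈ edges 6 ∧ rnk 5 6 ≤ rnk 5 2)),
      if_neg (by decide : ¬ ((5:Fin 9) ∈ edges 7 ∧ rnk 5 7 ≤ rnk 5 2)),
      if_neg (by decide : ¬ ((5:Fin 9) ∈ edges 8 ∧ rnk 5 8 ≤ rnk 5 2))] at hs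
    linarith [hnn 0, hnn 1, hnn 2, hnn 3, hnn 4, hnn 5, hnn 6, hnn 7, hnn 8]
  · rw [Finset.sum_filter, sum9] at hs
    rw [if_pos (by decide : (6:Fin 9) ∈ edges 0 ∧ rnk 6 0 ≤ rnk 6 2),
      if_neg (by decide : ¬ ((6:Fin 9) ∈ edges 1 ∧ rnk 6 1 ≤ rnk 6 2)),
      if_pos (by decide : (6:Fin 9) ∈ edges 2 ∧ rnk 6 2 ≤ rnk 6 2),
      if_neg (by decide : ¬ ((6:Fin 9) ∈ edges 3 ∧ rnk 6 3 ≤ rnk 6 2)),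
      if_neg (by decide : ¬ ((6:Fin 9) ∈ edges 4 ∧ rnk 6 4 ≤ rnk 6 2)),
      if_pos (by decide : (6:Fin 9) ∈ edges 5 ∧ rnk 6 5 ≤ rnk 6 2),
      if_neg (by decide : ¬ ((6:Fin 9) ∈ edges 6 ∧ rnk 6 6 ≤ rnk 6 2)),
      if_neg (by decide : ¬ ((6:Fin 9) ∈ edges 7 ∧ rnk 6 7 ≤ rnk 6 2)),
      if_neg (by decide : ¬ ((6:Fin 9) ∈ edges 8 ∧ rnk 6 8 ≤ rnk 6 2))] at hs
    linarith [hnn 0, hnn 1, hnn 2, hnn 3, hnn 4, hnn 5, hnn 6, hnn 7, hnn 8]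
  · rw [Finset.sum_filter, sum9] at hs
    rw [if_neg (by decide : ¬ ((7:Fin 9) ∈ edges 0 ∧ rnk 7 0 ≤ rnk 7 2)),
      if_neg (by decide : ¬ ((7:Fin 9) ∈ edges 1 ∧ rnk 7 1 ≤ rnk 7 2)),
      if_pos (by decide : (7:Fin 9) ∈ edges 2 ∧ rnk 7 2 ≤ rnk 7 2),
      if_neg (by decide : ¬ ((7:Fin 9) ∈ edges 3 ∧ rnk 7 3 ≤ rnk 7 2)),
      if_neg (by decide : ¬ ((7:Fin 9) ∈ edges 4 ∧ rnk 7 4 ≤ rnk 7 2)),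
      if_neg (by decide : ¬ ((7:Fin 9) ∈ edges 5 ∧ rnk 7 5 ≤ rnk 7 2)),
      if_neg (by decide : ¬ ((7:Fin 9) ∈ edges 6 ∧ rnk 7 6 ≤ rnk 7 2)),
      if_neg (by decide : ¬ ((7:Fin 9) ∈ edges 7 ∧ rnk 7 7 ≤ rnk 7 2)),
      if_neg (by decide : ¬ ((7:Fin 9) ∈ edges 8 ∧ rnk 7 8 ≤ rnk 7 2))] at hs
    linarith [hnn 0, hnn 1, hnn 2, hnn 3, hnn 4, hnn 5, hnn 6, hnn 7, hnn 8]
  · rw [Finset.sum_filter, sum9] at hs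
    rw [if_neg (by decide : ¬ ((8:Fin 9) ∈ edges 0 ∧ rnk 8 0 ≤ rnk 8 2)),
      if_neg (by decide : ¬ ((8:Fin 9) ∈ edges 1 ∧ rnk 8 1 ≤ rnk 8 2)),
      if_pos (by decide : (8:Fin 9) ∈ edges 2 ∧ rnk 8 2 ≤ rnk 8 2),
      if_neg (by decide : ¬ ((8:Fin 9) ∈ edges 3 ∧ rnk 8 3 ≤ rnk 8 2)),
      if_neg (by decide : ¬ ((8:Fin 9) ∈ edges 4 ∧ rnk 8 4 ≤ rnk 8 2)),
      if_pos (by decide : (8:Fin 9) ∈ edges 5 ∧ rnk 8 5 ≤ rnk 8 2),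
      if_neg (by decide : ¬ ((8:Fin 9) ∈ edges 6 ∧ rnk 8 6 ≤ rnk 8 2)),
      if_neg (by decide : ¬ ((8:Fin 9) ∈ edges 7 ∧ rnk 8 7 ≤ rnk 8 2)),
      if_neg (by decide : ¬ ((8:Fin 9) ∈ edges 8 ∧ rnk 8 8 ≤ rnk 8 2))] at hs
    linarith [hnn 0, hnn 1, hnn 2, hnn 3, hnn 4, hnn 5, hnn 6, hnn 7, hnn 8]

lemma stable_lb (y : Fin 9 → ℝ) (h : IsStable y) :
    2 ≤ y 0 + y 1 + y 2 + y 3 + y 4 + y 5 := by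
  obtain ⟨h01, hst⟩ := h
  have hnn : ∀ e, 0 ≤ y e := fun e => by rcases h01 e with h | h <;> rw [h] <;> norm_num
  have ha := stable_key1 y hnn (hst 1)
  have hb := stable_key2 y hnn (hst 2)
  have hc := stable_key0 y hnn (hst 0)
  rcases h01 0 with h0 | h0 <;> rcases h01 1 with h1 | h1 <;> rcases h01 2 with h2 | h2 <;>
    rcases h01 3 with h3 | h3 <;> rcases h01 4 with h4 | h4 <;> rcases h01 5 with h5 | h5 <;>
    linarith

/-- The fractional stable matching polytope of this interval hypergraphic preference
system is not integral: `xstar` is a non-integral extreme point of `Q(I)`, and in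
particular `Q(I)` strictly contains the convex hull of stable matchings. -/
theorem fractional_polytope_not_integral :
    InQ xstar ∧
    (∀ y z : Fin 9 → ℝ, InQ y → InQ z →
      xstar = (fun e => (y e + z e) / 2) → y = z) ∧
    (∃ e : Fin 9, ∀ k : ℤ, xstar e ≠ (k : ℝ)) ∧
    xstar ∉ convexHull ℝ {y : Fin 9 → ℝ | IsStable y} := by
  refine ⟨inQ_xstar, ?_, ?_, ?_⟩
  · intro y z hy hz h
    have hx : ∀ e, xstar e = (y e + z e) / 2 := fun e => congrFun h e
    obtain ⟨vy0, vy1, vy2, vy3, vy4, vy5, vy6, vy7, vy8⟩ := vtx_sums y hy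
    obtain ⟨vz0, vz1, vz2, vz3, vz4, vz5, vz6, vz7, vz8⟩ := vtx_sums z hz
    obtain ⟨sy0, sy1, sy2, sy3, sy4, sy5, sy6, sy7, sy8⟩ := stab_sums y hy
    obtain ⟨sz0, sz1, sz2, sz3, sz4, sz5, sz6, sz7, sz8⟩ := stab_sums z hz
    have hx0 := hx 0; rw [xv0] at hx0
    have hx1 := hx 1; rw [xv1] at hx1
    have hx2 := hx 2; rw [xv2] at hx2
    have hx3 := hx 3; rw [xv3] at hx3
    have hx4 := hx 4; rw [xv4] at hx4
    have hx5 := hx 5; rw [xv5] at hx5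
    have hx6 := hx 6; rw [xv6] at hx6
    have hx7 := hx 7; rw [xv7] at hx7
    have hx8 := hx 8; rw [xv8] at hx8
    have ny0 := (hy.1 0).1; have nz0 := (hz.1 0).1
    have ny1 := (hy.1 1).1; have nz1 := (hz.1 1).1
    have ny2 := (hy.1 2).1; have nz2 := (hz.1 2).1
    have ey0 : y 0 = 0 := by linarith
    have ez0 : z 0 = 0 := by linarith
    have ey1 : y 1 = 0 := by linarith
    have ez1 : z 1 = 0 := by linarith
    have ey2 : y 2 = 0 := by linarith
    have ez2 : z 2 = 0 := by linarith
    have q0 : y 0 = z 0 := by linarith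
    have q1 : y 1 = z 1 := by linarith
    have q2 : y 2 = z 2 := by linarith
    have q3 : y 3 = z 3 := by linarith
    have q4 : y 4 = z 4 := by linarith
    have q5 : y 5 = z 5 := by linarith
    have q6 : y 6 = z 6 := by linarith
    have q7 : y 7 = z 7 := by linarith
    have q8 : y 8 = z 8 := by linarith
    funext e
    rcases fin9_enum e with rfl|rfl|rfl|rfl|rfl|rfl|rfl|rfl|rfl
    exacts [q0, q1, q2, q3, q4, q5, q6, q7, q8]
  · refine ⟨3, fun k hk => ?_⟩
    rw [xv3] at hk
    have h2 : (1:ℤ) = 2 * k := by exact_mod_cast (by linarith : (1:ℝ) = 2 * k)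
    omega
  · intro hmem
    have hsub : {y : Fin 9 → ℝ | IsStable y} ⊆
        {y : Fin 9 → ℝ | 2 ≤ y 0 + y 1 + y 2 + y 3 + y 4 + y 5} :=
      fun y hy => stable_lb y hy
    have hl : IsLinearMap ℝ (fun y : Fin 9 → ℝ => y 0 + y 1 + y 2 + y 3 + y 4 + y 5) := by
      constructor <;> intros <;> simp [smul_eq_mul] <;> ring
    have hconv : Convex ℝ {y : Fin 9 → ℝ | 2 ≤ y 0 + y 1 + y 2 + y 3 + y 4 + y 5} :=
      convex_halfSpace_ge hl 2
    have hmem2 := convexHull_min hsub hconv hmem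
    simp only [Set.mem_setOf_eq] at hmem2
    rw [xv0, xv1, xv2, xv3, xv4, xv5] at hmem2
    norm_num at hmem2

end IntervalCounterexample
end
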